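/- arXiv:1008.5299 — 10 statements merged into one kernel-verified Lean document; each statement's English description precedes it below -/
import Mathlib

section
/- If σ = n₁λ₁n₂λ₂⋯n_kλ_k where n₁,...,n_k are the left-to-right maxima of σ, then one pass of bubble sort gives B(σ) = λ₁n₁λ₂n₂⋯λ_kn_k. -/
/-- One pass of bubble sort. -/
def bubble : List ℕ → List ℕ
  | [] => []
  | [a] => [a]
  | a :: b :: t => if a < b then a :: bubble (b :: t) else b :: bubble (a :: t)

/-- Two lists of the same length are order-isomorphic. -/
def OrdIso (a b : List ℕ) : Prop :=
  a.length = b.length ∧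
    ∀ i j, i < a.length → j < a.length → (a[i]! < a[j]! ↔ b[i]! < b[j]!)

/-- `τ` contains the pattern `π`: some subsequence of `τ` is order-isomorphic to `π`. -/
def PContains (π τ : List ℕ) : Prop := ∃ s : List ℕ, s.Sublist τ ∧ OrdIso π s

/-- `τ` avoids the pattern `π`. -/
def Avoids (τ π : List ℕ) : Prop := ¬ PContains π τ

/-- `σ` is (the word of) a permutation of `{1, …, n}`. -/
def IsPermList (σ : List ℕ) : Prop := σ.Perm (List.range' 1 σ.length)

lemma bubble_pass (l : List ℕ) (n : ℕ) (r : List ℕ) (h : ∀ x ∈ l, x < n) :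
    bubble (n :: (l ++ r)) = l ++ bubble (n :: r) := by
  induction l with
  | nil => simp
  | cons a t ih =>
    have ha : a < n := h a (by simp)
    simp only [List.cons_append, bubble, if_neg (by omega : ¬ n < a)]
    rw [ih (fun x hx => h x (by simp [hx]))]

/-- If `σ = n₁λ₁ n₂λ₂ ⋯ n_kλ_k` where the `nᵢ` are the left-to-right maxima,
then `B(σ) = λ₁n₁ λ₂n₂ ⋯ λ_kn_k`. -/
theorem bubble_ltr_maxima_decomposition
    (ns : List ℕ) (ls : List (List ℕ))
    (hlen : ns.length = ls.length)
    (hinc : ns.Chain' (· < ·))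
    (hblocks : ∀ i, i < ns.length → ∀ x ∈ ls[i]!, x < ns[i]!) :
    bubble (List.zipWith (fun n l => n :: l) ns ls).flatten =
      (List.zipWith (fun n l => l ++ [n]) ns ls).flatten := by
  induction ns generalizing ls with
  | nil => simp [bubble]
  | cons n ns' ih =>
    cases ls with
    | nil => simp at hlen
    | cons l ls' =>
      simp only [List.zipWith_cons_cons, List.flatten_cons, List.cons_append]
      have hl : ∀ x ∈ l, x < n := by
        have := hblocks 0 (by simp)
        simpa using this
      rw [show n :: (l ++ (List.zipWith (fun n l => n :: l) ns' ls').flatten)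
            = n :: (l ++ (List.zipWith (fun n l => n :: l) ns' ls').flatten) from rfl,
          bubble_pass l n _ hl]
      have hblocks' : ∀ i, i < ns'.length → ∀ x ∈ ls'[i]!, x < ns'[i]! := by
        intro i hi x hx
        have := hblocks (i+1) (by simp; omega)
        rw [List.getElem!_cons_succ, List.getElem!_cons_succ] at this
        exact this x hx
      have hinc' : ns'.Chain' (· < ·) := hinc.tail
      cases ns' with
      | nil => cases ls' <;> simp [bubble]
      | cons n₂ ns'' =>
        cases ls' with
        | nil => simp at hlen
        | cons l₂ ls'' =>
          have hn : n < n₂ := (List.isChain_cons_cons.mp hinc).1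
          simp only [List.zipWith_cons_cons, List.flatten_cons, List.cons_append]
          rw [show bubble (n :: n₂ :: (l₂ ++ (List.zipWith (fun n l => n :: l) ns'' ls'').flatten))
              = n :: bubble (n₂ :: (l₂ ++ (List.zipWith (fun n l => n :: l) ns'' ls'').flatten)) from by
                simp [bubble, hn]]
          have := ih (l₂ :: ls'') (by simpa using hlen) hinc' hblocks'
          simp only [List.zipWith_cons_cons, List.flatten_cons, List.cons_append] at this
          rw [this]
          simp
end

section
/- One pass of bubble sort preserves the relative order of elements that are not left-to-right maxima: if a and b are terms of σ that are not left-to-right maxima and a precedes b in σ, then a precedes b in B(σ). -/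
/-- A term of `σ` at position `i` is a left-to-right maximum. -/
def IsLTRMax (σ : List ℕ) (i : ℕ) : Prop := ∀ j < i, σ[j]! < σ[i]!

lemma bubble_perm (l : List ℕ) : (bubble l).Perm l := by
  induction l using bubble.induct with
  | case1 => simp [bubble]
  | case2 a => simp [bubble]
  | case3 a b t h ih => simp only [bubble, if_pos h]; exact ih.cons a
  | case4 a b t h ih =>
      simp only [bubble, if_neg h]
      exact (ih.cons b).trans (List.Perm.swap a b t)

lemma key (σ : List ℕ) : σ.Nodup → ∀ i j : ℕ, i < j → j < σ.length →
    ¬ IsLTRMax σ i → ¬ IsLTRMax σ j →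
    ∃ i' j', i' < j' ∧ j' < (bubble σ).length ∧
      (bubble σ)[i']! = σ[i]! ∧ (bubble σ)[j']! = σ[j]! := by
  induction σ using bubble.induct with
  | case1 => intro _ i j _ hj _ _; simp at hj
  | case2 a => intro _ i j hij hj _ _; simp at hj; omega
  | case3 a b t hab ih =>
      intro hnd i j hij hj hi' hj'
      -- position 0 is a left-to-right maximum, so i ≥ 1
      match i, j with
      | 0, _ => exact absurd (fun k hk => absurd hk (Nat.not_lt_zero k)) hi'
      | i₀ + 1, 0 => omega
      | i₀ + 1, j₀ + 1 =>
        have shift : ∀ k : ℕ, IsLTRMax (b :: t) k → IsLTRMax (a :: b :: t) (k + 1) := by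
          intro k hk m hm
          have hval : a < (b :: t)[k]! := by
            match k with
            | 0 => simpa using hab
            | k' + 1 => exact hab.trans (by simpa using hk 0 (Nat.succ_pos _))
          match m with
          | 0 => simpa using hval
          | m' + 1 =>
            have := hk m' (by omega)
            simpa using this
        have hi₀ : ¬ IsLTRMax (b :: t) i₀ := fun h => hi' (shift i₀ h)
        have hj₀ : ¬ IsLTRMax (b :: t) j₀ := fun h => hj' (shift j₀ h)
        have hjlen : j₀ < (b :: t).length := by simp only [List.length_cons] at hj ⊢; omega
        obtain ⟨i', j', h1, h2, h3, h4⟩ := ih hnd.of_cons i₀ j₀ (by omega) hjlen hi₀ hj₀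
        refine ⟨i' + 1, j' + 1, by omega, ?_, ?_, ?_⟩
        · simp only [bubble, if_pos hab, List.length_cons]; omega
        · simpa only [bubble, if_pos hab, List.getElem!_cons_succ] using h3
        · simpa only [bubble, if_pos hab, List.getElem!_cons_succ] using h4
  | case4 a b t hab ih =>
      intro hnd i j hij hj hi' hj'
      have hba : b < a := by
        rcases Nat.lt_or_ge b a with h | h
        · exact h
        · have : a ≠ b := by simp [List.nodup_cons] at hnd; tauto
          omega
      have hndat : (a :: t).Nodup := by
        simp only [List.nodup_cons, List.mem_cons] at hnd ⊢
        tauto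
      have shift : ∀ k : ℕ, IsLTRMax (a :: t) (k + 1) → IsLTRMax (a :: b :: t) (k + 2) := by
        intro k hk m hm
        have hval : a < (a :: t)[k + 1]! := by simpa using hk 0 (Nat.succ_pos _)
        have hgoal : (a :: b :: t)[k + 2]! = (a :: t)[k + 1]! := by
          simp [List.getElem!_cons_succ]
        rw [hgoal]
        match m with
        | 0 => simpa using hval
        | 1 => simp only [List.getElem!_cons_succ, List.getElem!_cons_zero] at hval ⊢
               exact hba.trans hval
        | m' + 2 =>
          have := hk (m' + 1) (by omega)
          simpa using this
      match i, j with
      | 0, _ => exact absurd (fun k hk => absurd hk (Nat.not_lt_zero k)) hi'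
      | 1, 0 => omega
      | 1, 1 => omega
      | 1, j₀ + 2 =>
        -- σ[1]! = b sits at position 0 of bubble σ; find σ[j]! inside bubble (a :: t)
        have hjlen : j₀ + 1 < (a :: t).length := by simp at hj ⊢; omega
        have hmem : (a :: t)[j₀ + 1]! ∈ (a :: t) := by
          rw [getElem!_pos (a :: t) (j₀ + 1) hjlen]
          exact List.getElem_mem _
        have hmem' : (a :: t)[j₀ + 1]! ∈ bubble (a :: t) :=
          ((bubble_perm (a :: t)).mem_iff).2 hmem
        obtain ⟨n, hn, hval⟩ := List.mem_iff_getElem.1 hmem'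
        refine ⟨0, n + 1, by omega, ?_, ?_, ?_⟩
        · simp only [bubble, if_neg hab, List.length_cons]; omega
        · simp [bubble, if_neg hab]
        · have : (bubble (a :: t))[n]! = (a :: t)[j₀ + 1]! := by
            rw [getElem!_pos (bubble (a :: t)) n hn]; exact hval
          simp only [bubble, if_neg hab, List.getElem!_cons_succ]
          rw [this]
          simp [List.getElem!_cons_succ]
      | i₀ + 2, 0 => omega
      | i₀ + 2, 1 => omega
      | i₀ + 2, j₀ + 2 =>
        have hi₀ : ¬ IsLTRMax (a :: t) (i₀ + 1) := fun h => hi' (shift i₀ h)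
        have hj₀ : ¬ IsLTRMax (a :: t) (j₀ + 1) := fun h => hj' (shift j₀ h)
        have hjlen : j₀ + 1 < (a :: t).length := by simp at hj ⊢; omega
        obtain ⟨i', j', h1, h2, h3, h4⟩ := ih hndat (i₀ + 1) (j₀ + 1) (by omega) hjlen hi₀ hj₀
        refine ⟨i' + 1, j' + 1, by omega, ?_, ?_, ?_⟩
        · simp only [bubble, if_neg hab, List.length_cons]; omega
        · simp only [bubble, if_neg hab, List.getElem!_cons_succ]
          rw [h3]; simp [List.getElem!_cons_succ]
        · simp only [bubble, if_neg hab, List.getElem!_cons_succ]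
          rw [h4]; simp [List.getElem!_cons_succ]

/-- One pass of bubble sort preserves the relative order of the elements that
are not left-to-right maxima. -/
theorem bubble_preserves_non_ltr_maxima
    (σ : List ℕ) (hnd : σ.Nodup) (i j : ℕ)
    (hij : i < j) (hj : j < σ.length)
    (hi' : ¬ IsLTRMax σ i) (hj' : ¬ IsLTRMax σ j) :
    ∃ i' j', i' < j' ∧ j' < (bubble σ).length ∧
      (bubble σ)[i']! = σ[i]! ∧ (bubble σ)[j']! = σ[j]! := by
  exact key σ hnd i j hij hj hi' hj'
end

section
/- B(σ) is an increasing sequence if and only if σ avoids both patterns 231 and 321, i.e., one pass of bubble sort sorts σ if and only if σ contains no subsequence order-isomorphic to 231 or 321. -/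
/-- The combinatorial condition: no two elements both exceed a later element. -/
def Good (l : List ℕ) : Prop := ∀ x y z : ℕ, [x, y, z].Sublist l → x < z ∨ y < z

lemma sorted_head_le {l : List ℕ} (hs : l.Chain' (· < ·)) {a x : ℕ}
    (ha : a ∈ l.head?) (hx : x ∈ l) : a ≤ x := by
  cases l with
  | nil => simp at hx
  | cons c rest =>
    simp only [List.head?_cons, Option.mem_def, Option.some.injEq] at ha
    subst ha
    have hp : (c :: rest).Pairwise (· < ·) := List.isChain_iff_pairwise.mp hs
    rcases List.mem_cons.mp hx with rfl | hx
    · exact le_rfl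
    · exact le_of_lt ((List.pairwise_cons.mp hp).1 x hx)

lemma mem_bubble {l : List ℕ} {x : ℕ} (hx : x ∈ l) : x ∈ bubble l :=
  (bubble_perm l).mem_iff.mpr hx

lemma key_s4 : ∀ l : List ℕ, l.Nodup → ((bubble l).Chain' (· < ·) ↔ Good l) := by
  intro l
  induction l using bubble.induct with
  | case1 =>
    intro _
    simp only [bubble]
    constructor
    · intro _ x y z hs
      exact absurd (List.sublist_nil.mp hs) (by simp)
    · intro _; exact List.isChain_nil
  | case2 a =>
    intro _
    simp only [bubble]
    constructor
    · intro _ x y z hs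
      have := hs.length_le
      simp at this
    · intro _; exact List.isChain_singleton a
  | case3 a b t hab ih =>
    intro hnd
    have hnd' : (b :: t).Nodup := hnd.of_cons
    rw [show bubble (a :: b :: t) = a :: bubble (b :: t) by simp [bubble, hab]]
    rw [(show List.Chain' (· < ·) (a :: bubble (b :: t)) ↔ (∀ y ∈ (bubble (b :: t)).head?, a < y) ∧ List.Chain' (· < ·) (bubble (b :: t)) from List.isChain_cons), ih hnd']
    constructor
    · rintro ⟨h1, h2⟩
      intro x y z hs
      cases hs with
      | cons _ hs' => exact h2 x y z hs'
      | cons_cons _ hs' =>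
        -- x = a, [y, z] <+ b :: t
        left
        have hz : z ∈ b :: t := hs'.subset (by simp)
        have hzb : z ∈ bubble (b :: t) := mem_bubble hz
        obtain ⟨h, rest, hb⟩ : ∃ h rest, bubble (b :: t) = h :: rest := by
          cases hbb : bubble (b :: t) with
          | nil => rw [hbb] at hzb; simp at hzb
          | cons h rest => exact ⟨h, rest, rfl⟩
        have hah : a < h := h1 h (by rw [hb]; rfl)
        have hhz : h ≤ z := by
          apply sorted_head_le ((ih hnd').mpr h2) _ hzb
          rw [hb]; rfl
        omega
    · intro hg
      have hg' : Good (b :: t) := fun x y z hs => hg x y z (hs.cons a)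
      refine ⟨?_, hg'⟩
      intro h hh
      have hhm : h ∈ b :: t := (bubble_perm (b :: t)).subset (List.mem_of_mem_head? hh)
      rcases List.mem_cons.mp hhm with rfl | hht
      · exact hab
      · have hs : [a, b, h].Sublist (a :: b :: t) :=
          (((List.singleton_sublist.mpr hht).cons₂ b).cons₂ a)
        rcases hg a b h hs with h' | h'
        · exact h'
        · -- b < h, but h ≤ b since h is the head of sorted bubble (b :: t)
          have hsorted : (bubble (b :: t)).Chain' (· < ·) := (ih hnd').mpr hg'
          have : h ≤ b := sorted_head_le hsorted hh (mem_bubble (by simp))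
          omega
  | case4 a b t hab ih =>
    intro hnd
    have hba : b < a := by
      have : a ≠ b := by
        intro h; subst h
        simp at hnd
      omega
    have hnd' : (a :: t).Nodup := by
      rw [List.nodup_cons] at hnd ⊢
      refine ⟨fun h => hnd.1 (List.mem_cons_of_mem b h), hnd.2.of_cons⟩
    rw [show bubble (a :: b :: t) = b :: bubble (a :: t) by simp [bubble, hab]]
    rw [(show List.Chain' (· < ·) (b :: bubble (a :: t)) ↔ (∀ y ∈ (bubble (a :: t)).head?, b < y) ∧ List.Chain' (· < ·) (bubble (a :: t)) from List.isChain_cons), ih hnd']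
    have hbt : ∀ z ∈ t, (bubble (a :: t)).Chain' (· < ·) →
        (∀ h ∈ (bubble (a :: t)).head?, b < h) → b < z := by
      intro z hz hchain h1
      have hzb : z ∈ bubble (a :: t) := mem_bubble (List.mem_cons_of_mem a hz)
      obtain ⟨h, rest, hbb⟩ : ∃ h rest, bubble (a :: t) = h :: rest := by
        cases hbb : bubble (a :: t) with
        | nil => rw [hbb] at hzb; simp at hzb
        | cons h rest => exact ⟨h, rest, rfl⟩
      have h1' : b < h := h1 h (by rw [hbb]; rfl)
      have : h ≤ z := sorted_head_le hchain (by rw [hbb]; rfl) hzb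
      omega
    constructor
    · rintro ⟨h1, h2⟩
      have hchain : (bubble (a :: t)).Chain' (· < ·) := (ih hnd').mpr h2
      intro x y z hs
      cases hs with
      | cons _ hs' =>
        -- [x, y, z] <+ b :: t
        cases hs' with
        | cons _ hs'' =>
          -- [x, y, z] <+ t
          exact h2 x y z (hs''.cons a)
        | cons_cons _ hs'' =>
          -- x = b, [y, z] <+ t
          left
          exact hbt z (hs''.subset (by simp)) hchain h1
      | cons_cons _ hs' =>
        -- x = a, [y, z] <+ b :: t
        cases hs' with
        | cons _ hs'' =>
          -- [y, z] <+ t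
          exact h2 a y z (hs''.cons₂ a)
        | cons_cons _ hs'' =>
          -- y = b, [z] <+ t
          right
          exact hbt z (hs''.subset (by simp)) hchain h1
    · intro hg
      have hg' : Good (a :: t) := by
        intro x y z hs
        cases hs with
        | cons _ hs' => exact hg x y z ((hs'.cons b).cons a)
        | cons_cons _ hs' => exact hg a y z ((hs'.cons b).cons₂ a)
      refine ⟨?_, hg'⟩
      intro h hh
      have hhm : h ∈ a :: t := (bubble_perm (a :: t)).subset (List.mem_of_mem_head? hh)
      rcases List.mem_cons.mp hhm with rfl | hht
      · exact hba
      · have hs : [a, b, h].Sublist (a :: b :: t) :=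
          (((List.singleton_sublist.mpr hht).cons₂ b).cons₂ a)
        rcases hg a b h hs with h' | h' <;> omega

lemma good_iff (σ : List ℕ) (hnd : σ.Nodup) :
    Good σ ↔ (Avoids σ [2, 3, 1] ∧ Avoids σ [3, 2, 1]) := by
  constructor
  · intro hg
    constructor
    · rintro ⟨s, hsub, hlen, hiso⟩
      have hl : s.length = 3 := by simpa using hlen.symm
      obtain ⟨x, y, z, rfl⟩ : ∃ x y z, s = [x, y, z] := by
        match s, hl with
        | [x, y, z], _ => exact ⟨x, y, z, rfl⟩
      have h1 := (hiso 2 0 (by norm_num) (by norm_num)).mp (by norm_num)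
      have h2 := (hiso 2 1 (by norm_num) (by norm_num)).mp (by norm_num)
      simp only [show [x,y,z][2]! = z from rfl, show [x,y,z][0]! = x from rfl,
        show [x,y,z][1]! = y from rfl] at h1 h2
      rcases hg x y z hsub with h | h <;> omega
    · rintro ⟨s, hsub, hlen, hiso⟩
      have hl : s.length = 3 := by simpa using hlen.symm
      obtain ⟨x, y, z, rfl⟩ : ∃ x y z, s = [x, y, z] := by
        match s, hl with
        | [x, y, z], _ => exact ⟨x, y, z, rfl⟩
      have h1 := (hiso 2 0 (by norm_num) (by norm_num)).mp (by norm_num)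
      have h2 := (hiso 2 1 (by norm_num) (by norm_num)).mp (by norm_num)
      simp only [show [x,y,z][2]! = z from rfl, show [x,y,z][0]! = x from rfl,
        show [x,y,z][1]! = y from rfl] at h1 h2
      rcases hg x y z hsub with h | h <;> omega
  · rintro ⟨h231, h321⟩ x y z hs
    by_contra hc
    push_neg at hc
    obtain ⟨hxz, hyz⟩ := hc
    have hndx : [x, y, z].Nodup := hs.nodup hnd
    simp only [List.nodup_cons, List.mem_cons, List.mem_singleton, List.not_mem_nil,
      or_false, not_or] at hndx
    have hxy : x ≠ y := hndx.1.1
    have hxz' : x ≠ z := hndx.1.2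
    have hyz' : y ≠ z := hndx.2.1
    have hzx : z < x := by omega
    have hzy : z < y := by omega
    rcases lt_or_gt_of_ne hxy with hlt | hgt
    · exact h231 ⟨[x, y, z], hs, rfl, by
        intro i j hi hj
        simp only [List.length_cons, List.length_nil] at hi hj
        interval_cases i <;> interval_cases j <;>
          simp only [show ([2,3,1] : List ℕ)[0]! = 2 from rfl,
            show ([2,3,1] : List ℕ)[1]! = 3 from rfl,
            show ([2,3,1] : List ℕ)[2]! = 1 from rfl,
            show [x,y,z][0]! = x from rfl, show [x,y,z][1]! = y from rfl,
            show [x,y,z][2]! = z from rfl] <;> omega⟩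
    · exact h321 ⟨[x, y, z], hs, rfl, by
        intro i j hi hj
        simp only [List.length_cons, List.length_nil] at hi hj
        interval_cases i <;> interval_cases j <;>
          simp only [show ([3,2,1] : List ℕ)[0]! = 3 from rfl,
            show ([3,2,1] : List ℕ)[1]! = 2 from rfl,
            show ([3,2,1] : List ℕ)[2]! = 1 from rfl,
            show [x,y,z][0]! = x from rfl, show [x,y,z][1]! = y from rfl,
            show [x,y,z][2]! = z from rfl] <;> omega⟩

/-- `B(σ)` is increasing iff `σ` avoids both `231` and `321`. -/
theorem bubble_sorts_iff_avoids_231_321 (σ : List ℕ) (hnd : σ.Nodup) :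
    (bubble σ).Chain' (· < ·) ↔ (Avoids σ [2, 3, 1] ∧ Avoids σ [3, 2, 1]) := by
  rw [key_s4 σ hnd, good_iff σ hnd]
end

section
/- A permutation σ is sorted by one pass of bubble sort if and only if, writing σ = σ₁ m σ₂ with m the maximum, σ₁ is sorted by one pass of bubble sort, σ₂ is increasing, and every term of σ₁ is less than every term of σ₂. -/
lemma bubble_max_cons (m : ℕ) (σ₂ : List ℕ) (h2 : ∀ x ∈ σ₂, x < m) :
    bubble (m :: σ₂) = σ₂ ++ [m] := by
  induction σ₂ with
  | nil => simp [bubble]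
  | cons b t ih =>
      have hb : b < m := h2 b (by simp)
      simp only [bubble, if_neg (not_lt.mpr hb.le)]
      rw [ih (fun x hx => h2 x (by simp [hx]))]
      simp

lemma bubble_append (m : ℕ) (σ₂ : List ℕ) (h2 : ∀ x ∈ σ₂, x < m)
    (l : List ℕ) (hl : ∀ x ∈ l, x < m) :
    bubble (l ++ m :: σ₂) = bubble l ++ σ₂ ++ [m] := by
  induction l using bubble.induct with
  | case1 => simpa [bubble] using bubble_max_cons m σ₂ h2
  | case2 a =>
      have ha : a < m := hl a (by simp)
      simp only [List.cons_append, List.nil_append, bubble, if_pos ha,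
        bubble_max_cons m σ₂ h2]
  | case3 a b t h ih =>
      simp only [List.cons_append, bubble, if_pos h]
      rw [← List.cons_append, ih (fun x hx => hl x (by simp at hx ⊢; tauto))]
  | case4 a b t h ih =>
      have hab : ¬ a < b := h
      simp only [List.cons_append, bubble, if_neg hab]
      rw [← List.cons_append, ih (fun x hx => hl x (by simp at hx ⊢; tauto))]

/-- Writing `σ = σ₁ m σ₂` with `m` the maximum: `σ` is sorted by one pass of
bubble sort iff `σ₁` is sorted by one pass, `σ₂` is increasing, and
`σ₁ < σ₂` termwise. -/
theorem bubble_sorted_split (σ₁ σ₂ : List ℕ) (m : ℕ)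
    (hm : ∀ x ∈ σ₁ ++ σ₂, x < m) :
    (bubble (σ₁ ++ m :: σ₂)).Chain' (· < ·) ↔
      ((bubble σ₁).Chain' (· < ·) ∧ σ₂.Chain' (· < ·) ∧
        ∀ a ∈ σ₁, ∀ b ∈ σ₂, a < b) := by
  have h1 : ∀ x ∈ σ₁, x < m := fun x hx => hm x (by simp [hx])
  have h2 : ∀ x ∈ σ₂, x < m := fun x hx => hm x (by simp [hx])
  rw [bubble_append m σ₂ h2 σ₁ h1]
  have hmem : ∀ x, x ∈ bubble σ₁ ↔ x ∈ σ₁ := fun x => (bubble_perm σ₁).mem_iff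
  simp only [List.Chain', List.isChain_iff_pairwise, List.append_assoc, List.pairwise_append,
    List.mem_append, List.mem_singleton, List.pairwise_singleton]
  constructor
  · rintro ⟨hp1, ⟨hp2, -, -⟩, hlt⟩
    exact ⟨hp1, hp2, fun a ha b hb => hlt a ((hmem a).mpr ha) b (Or.inl hb)⟩
  · rintro ⟨hp1, hp2, hlt⟩
    refine ⟨hp1, ⟨hp2, trivial, fun b hb c hc => ?_⟩, fun a ha b hb => ?_⟩
    · rw [hc]; exact h2 b hb
    · rcases hb with hb | hb
      · exact hlt a ((hmem a).mp ha) b hb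
      · rw [hb]; exact h1 a ((hmem a).mp ha)
end

section
/- Let σ and aλ be sequences, both of length greater than 1, such that aλ begins with its largest term and aλ is a subsequence of B(σ). Then there exists b > a such that σ contains either abλ or baλ as a subsequence (with b inserted as a new element larger than a). -/
lemma bubble_filter (c : ℕ) : ∀ (s : List ℕ) (y : ℕ), c ≤ y →
    (bubble (y :: s)).filter (· < c) = s.filter (· < c) := by
  intro s
  induction s with
  | nil => intro y hy; simp [bubble, Nat.not_lt.mpr hy]
  | cons z t ih =>
    intro y hy
    rw [bubble]
    split_ifs with h
    · have hz : c ≤ z := le_of_lt (lt_of_le_of_lt hy h)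
      simp [List.filter_cons, Nat.not_lt.mpr hy, Nat.not_lt.mpr hz, ih z hz]
    · simp [List.filter_cons, ih y hy]

lemma sublist_of_small {lam t : List ℕ} {a y : ℕ} (hmax : ∀ x ∈ lam, x < a)
    (ha : a ≤ y) (h : lam.Sublist (bubble (y :: t))) : lam.Sublist t := by
  have h1 : lam.filter (· < a) = lam := List.filter_eq_self.mpr (by
    intro x hx; simpa using hmax x hx)
  have h2 := h.filter (· < a)
  rw [h1, bubble_filter a t y ha] at h2
  exact h2.trans List.filter_sublist

lemma main_aux : ∀ (t : List ℕ) (x y a : ℕ) (lam : List ℕ),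
    (x :: y :: t).Nodup → lam ≠ [] → (∀ z ∈ lam, z < a) →
    (a :: lam).Sublist (bubble (x :: y :: t)) →
    ∃ b, a < b ∧ ((a :: b :: lam).Sublist (x :: y :: t) ∨
      (b :: a :: lam).Sublist (x :: y :: t)) := by
  intro t
  induction t with
  | nil =>
    intro x y a lam hnd hlam hmax hsub
    have hpos : 0 < lam.length := List.length_pos_iff.mpr hlam
    rw [bubble] at hsub
    split_ifs at hsub with h
    · simp only [bubble] at hsub
      have hlen := hsub.length_le
      simp at hlen
      have heq : a :: lam = [x, y] := hsub.eq_of_length (by simp; omega)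
      have ha : a = x := by injection heq
      have hl : lam = [y] := by injection heq with h1 h2
      have := hmax y (by simp [hl])
      omega
    · simp only [bubble] at hsub
      have hlen := hsub.length_le
      simp at hlen
      have heq : a :: lam = [y, x] := hsub.eq_of_length (by simp; omega)
      have ha : a = y := by injection heq
      have hl : lam = [x] := by injection heq with h1 h2
      have := hmax x (by simp [hl])
      omega
  | cons z t' ih =>
    intro x y a lam hnd hlam hmax hsub
    rw [bubble] at hsub
    split_ifs at hsub with h
    · -- hsub : (a :: lam) <+ x :: bubble (y :: z :: t')
      cases hsub with
      | cons _ h2 =>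
        obtain ⟨b, hb, hcase⟩ := ih y z a lam (by
          simpa using (List.nodup_cons.mp hnd).2) hlam hmax h2
        exact ⟨b, hb, by
          rcases hcase with hc | hc
          · exact Or.inl (hc.cons x)
          · exact Or.inr (hc.cons x)⟩
      | cons_cons _ h2 =>
        -- head = x (= a), lam <+ bubble (y :: z :: t'), all lam < a < y
        refine ⟨y, h, Or.inl ?_⟩
        have hs : lam.Sublist (z :: t') :=
          sublist_of_small hmax (le_of_lt h) h2
        exact (hs.cons₂ y).cons₂ _
    · have hyx : y < x := by
        have hne : x ≠ y := by
          intro he; subst he; simp at hnd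
        omega
      cases hsub with
      | cons _ h2 =>
        obtain ⟨b, hb, hcase⟩ := ih x z a lam (by
          have h1 := List.nodup_cons.mp hnd
          have h2' := List.nodup_cons.mp h1.2
          refine List.nodup_cons.mpr ⟨?_, h2'.2⟩
          intro hx; exact h1.1 (List.mem_cons_of_mem _ hx)) hlam hmax h2
        have hstep : (x :: z :: t').Sublist (x :: y :: z :: t') :=
          ((z :: t').sublist_cons_self y).cons₂ x
        exact ⟨b, hb, by
          rcases hcase with hc | hc
          · exact Or.inl (hc.trans hstep)
          · exact Or.inr (hc.trans hstep)⟩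
      | cons_cons _ h2 =>
        -- head = y (= a), lam <+ bubble (x :: z :: t')
        refine ⟨x, hyx, Or.inr ?_⟩
        have hs : lam.Sublist (z :: t') :=
          sublist_of_small hmax (le_of_lt hyx) h2
        exact ((hs.cons₂ _).cons₂ x)

/-- If `aλ` begins with its largest term and is a subsequence of `B(σ)`, with
both of length `> 1`, then for some `b > a`, `σ` contains `abλ` or `baλ`. -/
theorem subseq_of_bubble_subseq (σ : List ℕ) (a : ℕ) (lam : List ℕ)
    (hnd : σ.Nodup) (hσ : 1 < σ.length) (hlam : lam ≠ [])
    (hmax : ∀ x ∈ lam, x < a)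
    (hsub : (a :: lam).Sublist (bubble σ)) :
    ∃ b, a < b ∧ ((a :: b :: lam).Sublist σ ∨ (b :: a :: lam).Sublist σ) := by
  rcases σ with _ | ⟨x, _ | ⟨y, t⟩⟩
  · simp at hσ
  · simp at hσ
  · exact main_aux t x y a lam hnd hlam hmax hsub
end

section
/- Let λ be any sequence and a, b values with b > a and a greater than every term of λ. If σ contains a subsequence order-isomorphic to abλ or to baλ, then B(σ) contains a subsequence order-isomorphic to aλ. -/
lemma lemC : ∀ (l : List ℕ) (c : ℕ) (t : List ℕ), t.Sublist l → (∀ z ∈ t, z < c) →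
    t.Sublist (bubble (c :: l)) := by
  intro l
  induction l with
  | nil =>
    intro c t hs ht
    simp_all [bubble]
  | cons d r ih =>
    intro c t hs ht
    rw [bubble]
    cases hs with
    | cons _ h =>
      split
      · exact (ih d t h (fun z hz => lt_trans (ht z hz) ‹c < d›)).cons c
      · exact (ih c t h ht).cons d
    | cons_cons _ h =>
      have hdc : d < c := ht d (by simp)
      rw [if_neg (by omega)]
      exact (ih c _ h (fun z hz => ht z (by simp [hz]))).cons₂ d

lemma lemG : ∀ (n : ℕ) (l : List ℕ) (y : ℕ) (t : List ℕ), l.length ≤ n →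
    (y :: t).Sublist l → (∀ z ∈ t, z < y) → t.Sublist (bubble l) := by
  intro n
  induction n with
  | zero =>
    intro l y t hn hs ht
    have : l = [] := List.length_eq_zero_iff.mp (by omega)
    subst this
    simp at hs
  | succ n ih =>
    intro l y t hn hs ht
    match l with
    | [] => simp at hs
    | [c] =>
      cases hs with
      | cons _ h => simp at h
      | cons_cons _ h => simp_all [bubble]
    | c :: d :: r =>
      cases hs with
      | cons_cons _ h => exact lemC (d :: r) y t h ht
      | cons _ h =>
        rw [bubble]
        split
        · exact (ih (d :: r) y t (by simp at hn ⊢; omega) h ht).cons c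
        · cases h with
          | cons_cons _ h2 => exact (lemC r c t h2 (fun z hz => by have := ht z hz; omega)).cons y
          | cons _ h2 =>
            exact (ih (c :: r) y t (by simp at hn ⊢; omega) (h2.cons c) ht).cons d

lemma lemH : ∀ (n : ℕ) (l : List ℕ) (x y : ℕ) (t : List ℕ), l.length ≤ n →
    (x :: y :: t).Sublist l → x < y → (∀ z ∈ t, z < x) → (x :: t).Sublist (bubble l) := by
  intro n
  induction n with
  | zero =>
    intro l x y t hn hs hxy ht
    have : l = [] := List.length_eq_zero_iff.mp (by omega)
    subst this; simp at hs
  | succ n ih =>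
    intro l x y t hn hs hxy ht
    match l with
    | [] => simp at hs
    | [c] =>
      cases hs with
      | cons _ h => simp at h
      | cons_cons _ h => simp at h
    | c :: d :: r =>
      cases hs with
      | cons_cons _ h =>
        -- x = c (substituted), h : (y :: t).Sublist (d :: r)
        rw [bubble]
        split
        · exact (lemG (n) (d :: r) y t (by simp at hn ⊢; omega) h
            (fun z hz => lt_trans (ht z hz) hxy)).cons₂ x
        · cases h with
          | cons_cons _ h2 => omega
          | cons _ h2 =>
            exact (ih (x :: r) x y t (by simp at hn ⊢; omega) (h2.cons₂ x) hxy ht).cons d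
      | cons _ h =>
        rw [bubble]
        split
        · exact (ih (d :: r) x y t (by simp at hn ⊢; omega) h hxy ht).cons c
        · cases h with
          | cons_cons _ h2 =>
            exact (lemG n (c :: r) y t (by simp at hn ⊢; omega) (h2.cons c)
              (fun z hz => lt_trans (ht z hz) hxy)).cons₂ x
          | cons _ h2 =>
            exact (ih (c :: r) x y t (by simp at hn ⊢; omega) (h2.cons c) hxy ht).cons d

lemma lemI : ∀ (n : ℕ) (l : List ℕ) (x y : ℕ) (t : List ℕ), l.length ≤ n →
    (y :: x :: t).Sublist l → x < y → (∀ z ∈ t, z < x) → (x :: t).Sublist (bubble l) := by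
  intro n
  induction n with
  | zero =>
    intro l x y t hn hs hxy ht
    have : l = [] := List.length_eq_zero_iff.mp (by omega)
    subst this; simp at hs
  | succ n ih =>
    intro l x y t hn hs hxy ht
    match l with
    | [] => simp at hs
    | [c] =>
      cases hs with
      | cons _ h => simp at h
      | cons_cons _ h => simp at h
    | c :: d :: r =>
      cases hs with
      | cons_cons _ h =>
        -- y = c, h : (x :: t).Sublist (d :: r)
        exact lemC (d :: r) y (x :: t) h
          (by intro z hz; rcases List.mem_cons.mp hz with rfl | hz; · exact hxy
              · exact lt_trans (ht z hz) hxy)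
      | cons _ h =>
        rw [bubble]
        split
        · exact (ih (d :: r) x y t (by simp at hn ⊢; omega) h hxy ht).cons c
        · cases h with
          | cons_cons _ h2 =>
            -- y = d, h2 : (x :: t).Sublist r, ¬ c < d so y = d ≤ c
            refine (lemC r c (x :: t) h2 ?_).cons y
            intro z hz; rcases List.mem_cons.mp hz with rfl | hz
            · omega
            · have := ht z hz; omega
          | cons _ h2 =>
            exact (ih (c :: r) x y t (by simp at hn ⊢; omega) (h2.cons c) hxy ht).cons d

lemma ordIso_transfer (p q p' q' : List ℕ) (g : ℕ → ℕ)
    (h1 : p'.length = q'.length)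
    (hg : ∀ i, i < p'.length → g i < p.length ∧ p'[i]! = p[g i]! ∧ q'[i]! = q[g i]!)
    (h : OrdIso p q) : OrdIso p' q' := by
  refine ⟨h1, fun i j hi hj => ?_⟩
  obtain ⟨hgi, hpi, hqi⟩ := hg i hi
  obtain ⟨hgj, hpj, hqj⟩ := hg j hj
  rw [hpi, hpj, hqi, hqj]
  exact h.2 _ _ hgi hgj


/-- If `b > a > λ` and `σ` contains `abλ` or `baλ`, then `B(σ)` contains
`aλ`. -/
theorem bubble_contains_of_contains (σ : List ℕ) (a b : ℕ) (lam : List ℕ)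
    (hnd : σ.Nodup) (hab : a < b) (hmax : ∀ x ∈ lam, x < a)
    (h : PContains (a :: b :: lam) σ ∨ PContains (b :: a :: lam) σ) :
    PContains (a :: lam) (bubble σ) := by
  rcases h with ⟨s, hsub, hiso⟩ | ⟨s, hsub, hiso⟩
  · -- pattern a b λ ; s = x :: y :: t
    obtain ⟨x, s', rfl⟩ : ∃ x s', s = x :: s' := by
      cases s with
      | nil => have := hiso.1; simp at this
      | cons x s' => exact ⟨x, s', rfl⟩
    obtain ⟨y, t, rfl⟩ : ∃ y t, s' = y :: t := by
      cases s' with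
      | nil => have := hiso.1; simp at this
      | cons y t => exact ⟨y, t, rfl⟩
    have hlen : lam.length = t.length := by have := hiso.1; simpa using this
    have hxy : x < y := by
      have := (hiso.2 0 1 (by simp) (by simp)).mp (by simpa using hab)
      simpa using this
    have ht : ∀ z ∈ t, z < x := by
      intro z hz
      obtain ⟨i, hi, rfl⟩ := List.getElem_of_mem hz
      have hii : i < lam.length := by omega
      have := (hiso.2 (i + 2) 0 (by simp; omega) (by simp)).mp
        (by simpa [getElem!_pos lam i hii, List.getElem?_eq_getElem hii] using hmax lam[i] (List.getElem_mem hii))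
      simpa [getElem!_pos t i hi, List.getElem?_eq_getElem hi] using this
    refine ⟨x :: t, lemH σ.length σ x y t le_rfl hsub hxy ht, ?_⟩
    refine ordIso_transfer (a :: b :: lam) (x :: y :: t) _ _
      (fun k => if k = 0 then 0 else k + 1) (by simp [hlen]) ?_ hiso
    intro i hi
    rcases i with _ | k
    · simp
    · simp at hi
      simp [Nat.succ_ne_zero]
      omega
  · -- pattern b a λ ; s = y :: x :: t
    obtain ⟨y, s', rfl⟩ : ∃ y s', s = y :: s' := by
      cases s with
      | nil => have := hiso.1; simp at this
      | cons y s' => exact ⟨y, s', rfl⟩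
    obtain ⟨x, t, rfl⟩ : ∃ x t, s' = x :: t := by
      cases s' with
      | nil => have := hiso.1; simp at this
      | cons x t => exact ⟨x, t, rfl⟩
    have hlen : lam.length = t.length := by have := hiso.1; simpa using this
    have hxy : x < y := by
      have := (hiso.2 1 0 (by simp) (by simp)).mp (by simpa using hab)
      simpa using this
    have ht : ∀ z ∈ t, z < x := by
      intro z hz
      obtain ⟨i, hi, rfl⟩ := List.getElem_of_mem hz
      have hii : i < lam.length := by omega
      have := (hiso.2 (i + 2) 1 (by simp; omega) (by simp)).mp
        (by simpa [getElem!_pos lam i hii, List.getElem?_eq_getElem hii] using hmax lam[i] (List.getElem_mem hii))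
      simpa [getElem!_pos t i hi, List.getElem?_eq_getElem hi] using this
    refine ⟨x :: t, lemI σ.length σ x y t le_rfl hsub hxy ht, ?_⟩
    refine ordIso_transfer (b :: a :: lam) (y :: x :: t) _ _
      (fun k => if k = 0 then 1 else k + 1) (by simp [hlen]) ?_ hiso
    intro i hi
    rcases i with _ | k
    · simp
    · simp at hi
      simp [Nat.succ_ne_zero]
      omega
end

section
/- Suppose π = nα is a permutation of length n > 1 beginning with its maximal element n. Then B⁻¹(Av(π)) is a pattern class with basis {n(n+1)α, (n+1)nα}, i.e., B(σ) avoids π if and only if σ avoids both n(n+1)α and (n+1)nα. -/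
lemma cons_sublist_cases {a x : ℕ} {γ t : List ℕ} (h : (a :: γ).Sublist (x :: t)) :
    (a :: γ).Sublist t ∨ (a = x ∧ γ.Sublist t) := by
  rcases List.sublist_cons_iff.mp h with h' | ⟨r, hr, hr'⟩
  · exact Or.inl h'
  · obtain ⟨h1, h2⟩ := List.cons_eq_cons.mp hr
    exact Or.inr ⟨h1, h2 ▸ hr'⟩

lemma sublist_of_lt_head {s : List ℕ} {c : ℕ} {t : List ℕ}
    (h : s.Sublist (c :: t)) (hs : ∀ e ∈ s, e < c) : s.Sublist t := by
  rcases List.sublist_cons_iff.mp h with h' | ⟨r, rfl, hr⟩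
  · exact h'
  · exact absurd (hs c (by simp)) (lt_irrefl c)

lemma sublist_bubble_of_le : ∀ (t : List ℕ) {x : ℕ} {s : List ℕ},
    s.Sublist t → (∀ c ∈ s, c ≤ x) → s.Sublist (bubble (x :: t)) := by
  intro t
  induction t with
  | nil => intro x s hs _; simp only [List.sublist_nil] at hs; simp [hs, bubble]
  | cons b t ih =>
    intro x s hs hle
    by_cases hxb : x < b
    · have hs' : s.Sublist t := sublist_of_lt_head hs (fun e he => lt_of_le_of_lt (hle e he) hxb)
      have : s.Sublist (bubble (b :: t)) := ih hs' (fun e he => le_of_lt (lt_of_le_of_lt (hle e he) hxb))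
      simpa [bubble, if_pos hxb] using this.cons x
    · simp only [bubble, if_neg hxb]
      rcases List.sublist_cons_iff.mp hs with h' | ⟨r, rfl, hr⟩
      · exact (ih h' hle).cons b
      · exact (ih hr (fun e he => hle e (by simp [he]))).cons₂ b

lemma sublist_of_sublist_bubble : ∀ (t : List ℕ) {x : ℕ} {s : List ℕ},
    s.Sublist (bubble (x :: t)) → (∀ c ∈ s, c < x) → s.Sublist t := by
  intro t
  induction t with
  | nil =>
    intro x s hs hlt
    have : s.Sublist [] := sublist_of_lt_head (by simpa [bubble] using hs) hlt
    simpa using this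
  | cons b t ih =>
    intro x s hs hlt
    by_cases hxb : x < b
    · simp only [bubble, if_pos hxb] at hs
      have hs' : s.Sublist (bubble (b :: t)) := sublist_of_lt_head hs hlt
      exact (ih hs' (fun e he => lt_trans (hlt e he) hxb)).cons b
    · simp only [bubble, if_neg hxb] at hs
      rcases List.sublist_cons_iff.mp hs with h' | ⟨r, rfl, hr⟩
      · exact (ih h' hlt).cons b
      · exact (ih hr (fun e he => hlt e (by simp [he]))).cons₂ b

lemma fwd : ∀ (t : List ℕ) {x a : ℕ} {γ : List ℕ}, (x :: t).Nodup → γ ≠ [] →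
    (∀ c ∈ γ, c < a) → (a :: γ).Sublist (bubble (x :: t)) →
    ∃ b, a < b ∧ ((b :: a :: γ).Sublist (x :: t) ∨ (a :: b :: γ).Sublist (x :: t)) := by
  intro t
  induction t with
  | nil =>
    intro x a γ _ hγ _ hs
    simp only [bubble] at hs
    have := hs.length_le
    simp at this
    exact absurd this hγ
  | cons c t ih =>
    intro x a γ hnd hγ hγa hs
    by_cases hxc : x < c
    · simp only [bubble, if_pos hxc] at hs
      rcases cons_sublist_cases hs with h' | ⟨rfl, hγ'⟩
      · obtain ⟨b, hb, hocc⟩ := ih hnd.of_cons hγ hγa h'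
        exact ⟨b, hb, hocc.imp (·.cons x) (·.cons x)⟩
      · have : γ.Sublist t := sublist_of_sublist_bubble t hγ'
          (fun e he => lt_trans (hγa e he) hxc)
        exact ⟨c, hxc, Or.inr ((this.cons₂ c).cons₂ a)⟩
    · simp only [bubble, if_neg hxc] at hs
      have hcx : c < x := by
        rcases lt_or_eq_of_le (not_lt.mp hxc) with h | h
        · exact h
        · exact absurd (by simp [h]) (List.nodup_cons.mp hnd).1
      rcases cons_sublist_cases hs with h' | ⟨rfl, hγ'⟩
      · have lift : (x :: t).Sublist (x :: c :: t) := (List.sublist_cons_self c t).cons₂ x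
        have hnd' : (x :: t).Nodup := lift.nodup hnd
        obtain ⟨b, hb, hocc⟩ := ih hnd' hγ hγa h'
        exact ⟨b, hb, hocc.imp (·.trans lift) (·.trans lift)⟩
      · have : γ.Sublist t := sublist_of_sublist_bubble t hγ'
          (fun e he => lt_trans (hγa e he) hcx)
        exact ⟨x, hcx, Or.inl ((this.cons₂ a).cons₂ x)⟩

lemma bwd : ∀ (t : List ℕ) {x a b : ℕ} {γ : List ℕ}, a < b → (∀ c ∈ γ, c < a) →
    ((b :: a :: γ).Sublist (x :: t) ∨ (a :: b :: γ).Sublist (x :: t)) →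
    (a :: γ).Sublist (bubble (x :: t)) := by
  intro t
  induction t with
  | nil =>
    intro x a b γ _ _ hocc
    rcases hocc with h | h <;> · have := h.length_le; simp at this
  | cons c t ih =>
    intro x a b γ hab hγa hocc
    by_cases hxc : x < c
    · simp only [bubble, if_pos hxc]
      rcases hocc with h | h
      -- occurrence b::a::γ
      · rcases cons_sublist_cases h with h' | ⟨rfl, h'⟩
        · exact (ih hab hγa (Or.inl h')).cons x
        · -- b = x, (a::γ) <+ c::t, elements < b = x < c
          have hlt : ∀ e ∈ a :: γ, e < c := by
            intro e he
            rcases List.mem_cons.mp he with rfl | he'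
            · exact lt_trans hab hxc
            · exact lt_trans (lt_trans (hγa e he') hab) hxc
          have h1 : (a :: γ).Sublist t := sublist_of_lt_head h' hlt
          exact (sublist_bubble_of_le t h1 (fun e he => le_of_lt (hlt e he))).cons b
      -- occurrence a::b::γ
      · rcases cons_sublist_cases h with h' | ⟨rfl, h'⟩
        · exact (ih hab hγa (Or.inr h')).cons x
        · -- a = x; (b::γ) <+ c::t; need γ <+ bubble (c::t)
          have hγct : γ.Sublist (c :: t) := (List.sublist_cons_self b γ).trans h'
          have hγt : γ.Sublist t := sublist_of_lt_head hγct
            (fun e he => lt_trans (hγa e he) hxc)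
          exact (sublist_bubble_of_le t hγt
            (fun e he => le_of_lt (lt_trans (hγa e he) hxc))).cons₂ a
    · simp only [bubble, if_neg hxc]
      have hcx : c ≤ x := not_lt.mp hxc
      rcases hocc with h | h
      -- occurrence b::a::γ
      · rcases cons_sublist_cases h with h' | ⟨rfl, h'⟩
        · -- b::a::γ <+ c::t
          rcases cons_sublist_cases h' with h'' | ⟨rfl, h''⟩
          · exact (ih hab hγa (Or.inl (h''.cons x))).cons c
          · -- b = c, a::γ <+ t, all ≤ x since < b = c ≤ x
            have hle : ∀ e ∈ a :: γ, e ≤ x := by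
              intro e he
              rcases List.mem_cons.mp he with rfl | he'
              · exact le_of_lt (lt_of_lt_of_le hab hcx)
              · exact le_of_lt (lt_of_lt_of_le (lt_trans (hγa e he') hab) hcx)
            exact (sublist_bubble_of_le t h'' hle).cons b
        · -- b = x, a::γ <+ c::t
          rcases cons_sublist_cases h' with h'' | ⟨rfl, h''⟩
          · -- a::γ <+ t : use ih with left occurrence (b=x)::a::γ <+ x::t
            exact (ih hab hγa (Or.inl (h''.cons₂ b))).cons c
          · -- a = c, γ <+ t, γ < a = c ≤ x
            exact (sublist_bubble_of_le t h''
              (fun e he => le_of_lt (lt_of_lt_of_le (hγa e he) hcx))).cons₂ a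
      -- occurrence a::b::γ
      · rcases cons_sublist_cases h with h' | ⟨rfl, h'⟩
        · rcases cons_sublist_cases h' with h'' | ⟨rfl, h''⟩
          · exact (ih hab hγa (Or.inr (h''.cons x))).cons c
          · -- a = c, b::γ <+ t ; γ <+ t, γ < a = c ≤ x
            have hγt : γ.Sublist t := (List.sublist_cons_self b γ).trans h''
            exact (sublist_bubble_of_le t hγt
              (fun e he => le_of_lt (lt_of_lt_of_le (hγa e he) hcx))).cons₂ a
        · -- a = x, b::γ <+ c::t, b > a = x ≥ c so b ≠ c
          rcases cons_sublist_cases h' with h'' | ⟨rfl, h''⟩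
          · -- b::γ <+ t: ih right occurrence a::b::γ <+ x::t with a = x
            exact (ih hab hγa (Or.inr (h''.cons₂ a))).cons c
          · exact absurd (lt_of_le_of_lt hcx hab) (lt_irrefl _)

-- membership to index
lemma forall_mem_of_getElem! {l : List ℕ} {P : ℕ → Prop}
    (h : ∀ i, i < l.length → P l[i]!) : ∀ e ∈ l, P e := by
  intro e he
  obtain ⟨i, hi, rfl⟩ := List.mem_iff_getElem.mp he
  have := h i hi
  rwa [getElem!_pos l i hi] at this

lemma getElem!_lt_of_forall {l : List ℕ} {P : ℕ → Prop}
    (h : ∀ e ∈ l, P e) {i : ℕ} (hi : i < l.length) : P l[i]! := by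
  rw [getElem!_pos l i hi]
  exact h _ (List.getElem_mem _)

-- insertion at position 1 : OrdIso (n::α) (a::γ) → OrdIso (n::M::α) (a::w::γ)
lemma ordIso_ins1 {n M a w : ℕ} {α γ : List ℕ} (h : OrdIso (n :: α) (a :: γ))
    (hα : ∀ e ∈ α, e < n) (hγ : ∀ e ∈ γ, e < a) (hM : n < M) (hw : a < w) :
    OrdIso (n :: M :: α) (a :: w :: γ) := by
  obtain ⟨hlen, hcmp⟩ := h
  simp only [List.length_cons] at hlen
  refine ⟨by simp [hlen], ?_⟩
  intro i j hi hj
  simp only [List.length_cons] at hi hj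
  match i, j with
  | 0, 0 => simp
  | 0, 1 => simpa using ⟨fun _ => hw, fun _ => hM⟩
  | 1, 0 => simp [Nat.not_lt.mpr (le_of_lt hM), Nat.not_lt.mpr (le_of_lt hw)]
  | 1, 1 => simp
  | 0, j + 2 =>
    simpa using hcmp 0 (j + 1) (by simp) (by simp; omega)
  | j + 2, 0 =>
    simpa using hcmp (j + 1) 0 (by simp; omega) (by simp)
  | 1, j + 2 =>
    have h1 : α[j]! < M := lt_trans (getElem!_lt_of_forall hα (by omega)) hM
    have h2 : γ[j]! < w := lt_trans (getElem!_lt_of_forall hγ (by omega)) hw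
    simp at h1 h2
    simp [Nat.not_lt.mpr (le_of_lt h1), Nat.not_lt.mpr (le_of_lt h2)]
  | j + 2, 1 =>
    have h1 : α[j]! < M := lt_trans (getElem!_lt_of_forall hα (by omega)) hM
    have h2 : γ[j]! < w := lt_trans (getElem!_lt_of_forall hγ (by omega)) hw
    simp at h1 h2
    simp [h1, h2]
  | i + 2, j + 2 =>
    simpa using hcmp (i + 1) (j + 1) (by simp; omega) (by simp; omega)

-- insertion at position 0
lemma ordIso_ins0 {n M a w : ℕ} {α γ : List ℕ} (h : OrdIso (n :: α) (a :: γ))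
    (hα : ∀ e ∈ α, e < n) (hγ : ∀ e ∈ γ, e < a) (hM : n < M) (hw : a < w) :
    OrdIso (M :: n :: α) (w :: a :: γ) := by
  obtain ⟨hlen, hcmp⟩ := h
  simp only [List.length_cons] at hlen
  refine ⟨by simp [hlen], ?_⟩
  intro i j hi hj
  simp only [List.length_cons] at hi hj
  match i, j with
  | 0, 0 => simp
  | 0, 1 => simp [Nat.not_lt.mpr (le_of_lt hM), Nat.not_lt.mpr (le_of_lt hw)]
  | 1, 0 => simpa using ⟨fun _ => hw, fun _ => hM⟩
  | 1, 1 => simp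
  | 1, j + 2 =>
    simpa using hcmp 0 (j + 1) (by simp) (by simp; omega)
  | j + 2, 1 =>
    simpa using hcmp (j + 1) 0 (by simp; omega) (by simp)
  | 0, j + 2 =>
    have h1 : α[j]! < M := lt_trans (getElem!_lt_of_forall hα (by omega)) hM
    have h2 : γ[j]! < w := lt_trans (getElem!_lt_of_forall hγ (by omega)) hw
    simp at h1 h2
    simp [Nat.not_lt.mpr (le_of_lt h1), Nat.not_lt.mpr (le_of_lt h2)]
  | j + 2, 0 =>
    have h1 : α[j]! < M := lt_trans (getElem!_lt_of_forall hα (by omega)) hM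
    have h2 : γ[j]! < w := lt_trans (getElem!_lt_of_forall hγ (by omega)) hw
    simp at h1 h2
    simp [h1, h2]
  | i + 2, j + 2 =>
    simpa using hcmp (i + 1) (j + 1) (by simp; omega) (by simp; omega)

-- deletion at position 1
lemma ordIso_del1 {n M a w : ℕ} {α γ : List ℕ} (h : OrdIso (n :: M :: α) (a :: w :: γ)) :
    OrdIso (n :: α) (a :: γ) := by
  obtain ⟨hlen, hcmp⟩ := h
  simp only [List.length_cons] at hlen
  refine ⟨by simp; omega, ?_⟩
  intro i j hi hj
  simp only [List.length_cons] at hi hj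
  match i, j with
  | 0, 0 => simpa using hcmp 0 0 (by simp) (by simp)
  | 0, j + 1 => simpa using hcmp 0 (j + 2) (by simp) (by simp; omega)
  | i + 1, 0 => simpa using hcmp (i + 2) 0 (by simp; omega) (by simp)
  | i + 1, j + 1 => simpa using hcmp (i + 2) (j + 2) (by simp; omega) (by simp; omega)

-- deletion at position 0
lemma ordIso_del0 {M w : ℕ} {α γ : List ℕ} (h : OrdIso (M :: α) (w :: γ)) :
    OrdIso α γ := by
  obtain ⟨hlen, hcmp⟩ := h
  simp only [List.length_cons] at hlen
  refine ⟨by omega, ?_⟩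
  intro i j hi hj
  simpa using hcmp (i + 1) (j + 1) (by simp; omega) (by simp; omega)

/-- If `π = nα` has length `n > 1` and begins with its maximal element, then
`B⁻¹(Av(π))` is the pattern class with basis `{n(n+1)α, (n+1)nα}`. -/
theorem preimage_one_ltr_max (n : ℕ) (α : List ℕ)
    (hπ : IsPermList (n :: α)) (hn : (n :: α).length = n) (h1 : 1 < n) :
    ∀ σ : List ℕ, IsPermList σ →
      (Avoids (bubble σ) (n :: α) ↔
        (Avoids σ (n :: (n + 1) :: α) ∧ Avoids σ ((n + 1) :: n :: α))) := by
  intro σ hσ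
  -- basic facts
  have hlenα : α.length + 1 = n := by simpa using hn
  have hndπ : (n :: α).Nodup := hπ.nodup_iff.mpr (List.nodup_range' 1 Nat.one_pos)
  have hα : ∀ e ∈ α, e < n := by
    intro e he
    have he' : e ∈ List.range' 1 (n :: α).length := hπ.mem_iff.mp (by simp [he])
    rw [hn, List.mem_range'_1] at he'
    have hne : e ≠ n := by
      intro h; exact (List.nodup_cons.mp hndπ).1 (h ▸ he)
    omega
  have hσnd : σ.Nodup := hσ.nodup_iff.mpr (List.nodup_range' 1 Nat.one_pos)
  constructor
  · -- bubble σ avoids π → σ avoids both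
    intro hA
    constructor
    · rintro ⟨s, hsub, hiso⟩
      -- s matches n::(n+1)::α
      obtain ⟨a, w, γ, rfl⟩ : ∃ a w γ, s = a :: w :: γ := by
        have hl := hiso.1
        rcases s with _ | ⟨a, _ | ⟨w, γ⟩⟩ <;> simp at hl
        exact ⟨a, w, γ, rfl⟩
      have hlg : γ.length = α.length := by have := hiso.1; simpa using this.symm
      have haw : a < w := by
        have := hiso.2 0 1 (by simp) (by simp)
        simp only [List.getElem!_cons_zero, List.getElem!_cons_succ] at this
        exact this.mp (by omega)
      have hγa : ∀ e ∈ γ, e < a := by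
        apply forall_mem_of_getElem!
        intro j hj
        have := hiso.2 (j + 2) 0 (by simp; omega) (by simp)
        simp only [List.getElem!_cons_succ, List.getElem!_cons_zero] at this
        exact this.mp (getElem!_lt_of_forall hα (by omega))
      rcases σ with _ | ⟨x, t⟩
      · simpa using hsub.length_le
      exact hA ⟨a :: γ, bwd t haw hγa (Or.inr hsub), ordIso_del1 hiso⟩
    · rintro ⟨s, hsub, hiso⟩
      obtain ⟨w, a, γ, rfl⟩ : ∃ w a γ, s = w :: a :: γ := by
        have hl := hiso.1
        rcases s with _ | ⟨w, _ | ⟨a, γ⟩⟩ <;> simp at hl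
        exact ⟨w, a, γ, rfl⟩
      have hlg : γ.length = α.length := by have := hiso.1; simpa using this.symm
      have haw : a < w := by
        have := hiso.2 1 0 (by simp) (by simp)
        simp only [List.getElem!_cons_zero, List.getElem!_cons_succ] at this
        exact this.mp (by omega)
      have hγa : ∀ e ∈ γ, e < a := by
        apply forall_mem_of_getElem!
        intro j hj
        have := hiso.2 (j + 2) 1 (by simp; omega) (by simp)
        simp only [List.getElem!_cons_succ, List.getElem!_cons_zero] at this
        exact this.mp (getElem!_lt_of_forall hα (by omega))
      rcases σ with _ | ⟨x, t⟩
      · simpa using hsub.length_le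
      exact hA ⟨a :: γ, bwd t haw hγa (Or.inl hsub), ordIso_del0 hiso⟩
  · -- σ avoids both → bubble σ avoids π
    rintro ⟨hA1, hA2⟩ ⟨s, hsub, hiso⟩
    obtain ⟨a, γ, rfl⟩ : ∃ a γ, s = a :: γ := by
      rcases s with _ | ⟨a, γ⟩
      · have hl := hiso.1; simp at hl
      · exact ⟨a, γ, rfl⟩
    have hlg : γ.length = α.length := by have := hiso.1; simpa using this.symm
    have hγne : γ ≠ [] := by
      intro h
      rw [h] at hlg
      simp at hlg
      omega
    have hγa : ∀ e ∈ γ, e < a := by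
      apply forall_mem_of_getElem!
      intro j hj
      have := hiso.2 (j + 1) 0 (by simp; omega) (by simp)
      simp only [List.getElem!_cons_succ, List.getElem!_cons_zero] at this
      exact this.mp (getElem!_lt_of_forall hα (by omega))
    rcases σ with _ | ⟨x, t⟩
    · simp only [bubble] at hsub; simpa using hsub.length_le
    obtain ⟨b, hab, hocc⟩ := fwd t hσnd hγne hγa hsub
    rcases hocc with h | h
    · exact hA2 ⟨b :: a :: γ, h, ordIso_ins0 hiso hα hγa (Nat.lt_succ_self n) hab⟩
    · exact hA1 ⟨a :: b :: γ, h, ordIso_ins1 hiso hα hγa (Nat.lt_succ_self n) hab⟩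
end

section
/- If π = aαbβc has exactly three left-to-right maxima a, b, c with c maximal and final, and β is non-empty, then B⁻¹(Av(aαbβc)) = B⁻¹(Av(aαbβ)). -/
lemma bubble_max (l : List ℕ) (h : l ≠ []) :
    ∃ t m, bubble l = t ++ [m] ∧ ∀ x ∈ l, x ≤ m := by
  induction l using bubble.induct with
  | case1 => simp at h
  | case2 a => exact ⟨[], a, by simp [bubble], by simp⟩
  | case3 a b t hlt ih =>
      obtain ⟨t', m, ht', hm⟩ := ih (by simp)
      refine ⟨a :: t', m, by simp [bubble, if_pos hlt, ht'], ?_⟩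
      intro x hx
      simp only [List.mem_cons] at hx
      rcases hx with rfl | rfl | hx
      · exact le_trans (le_of_lt hlt) (hm b (by simp))
      · exact hm x (by simp)
      · exact hm x (by simp [hx])
  | case4 a b t hlt ih =>
      obtain ⟨t', m, ht', hm⟩ := ih (by simp)
      refine ⟨b :: t', m, by simp [bubble, if_neg hlt, ht'], ?_⟩
      intro x hx
      simp only [List.mem_cons] at hx
      rcases hx with rfl | rfl | hx
      · exact hm x (by simp)
      · exact le_trans (Nat.le_of_not_lt hlt) (hm a (by simp))
      · exact hm x (by simp [hx])

lemma ge_left {l r : List ℕ} {i : ℕ} (h : i < l.length) : (l ++ r)[i]! = l[i]! := by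
  rw [getElem!_pos (l ++ r) i (by simp; omega), getElem!_pos l i h,
    List.getElem_append_left]

lemma ge_mid {l r : List ℕ} {x : ℕ} : (l ++ x :: r)[l.length]! = x := by
  rw [getElem!_pos (l ++ x :: r) l.length (by simp), List.getElem_append_right (le_refl _)]
  simp

lemma ge_concat {l : List ℕ} {x : ℕ} : (l ++ [x])[l.length]! = x := ge_mid

lemma mem_of_ge {l : List ℕ} {i : ℕ} (h : i < l.length) : l[i]! ∈ l := by
  rw [getElem!_pos l i h]; exact List.getElem_mem h

lemma ordIso_prefix {x y : List ℕ} {u v : ℕ}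
    (h : OrdIso (x ++ [u]) (y ++ [v])) : OrdIso x y := by
  have hl : x.length = y.length := by have := h.1; simp at this; omega
  refine ⟨hl, fun i j hi hj => ?_⟩
  have := h.2 i j (by simp <;> omega) (by simp <;> omega)
  rwa [ge_left hi, ge_left hj, ge_left (hl ▸ hi), ge_left (hl ▸ hj)] at this

lemma ordIso_concat {x y : List ℕ} {u v : ℕ} (h : OrdIso x y)
    (hu : ∀ p ∈ x, p < u) (hv : ∀ q ∈ y, q < v) : OrdIso (x ++ [u]) (y ++ [v]) := by
  have hxy : x.length = y.length := h.1
  have hvv : (y ++ [v])[x.length]! = v := by rw [hxy]; exact ge_concat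
  refine ⟨by simp [hxy], fun i j hi hj => ?_⟩
  simp only [List.length_append, List.length_singleton] at hi hj
  rcases Nat.lt_or_ge i x.length with hi' | hi' <;>
    rcases Nat.lt_or_ge j x.length with hj' | hj'
  · rw [ge_left hi', ge_left hj', ge_left (show i < y.length by omega),
      ge_left (show j < y.length by omega)]
    exact h.2 i j hi' hj'
  · have hj'' : j = x.length := by omega
    subst hj''
    rw [ge_left hi', ge_concat, ge_left (show i < y.length by omega), hvv]
    have h1 : x[i]! < u := hu _ (mem_of_ge hi')
    have h2 : y[i]! < v := hv _ (mem_of_ge (show i < y.length by omega))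
    exact ⟨fun _ => h2, fun _ => h1⟩
  · have hi'' : i = x.length := by omega
    subst hi''
    rw [ge_left hj', ge_concat, ge_left (show j < y.length by omega), hvv]
    have h1 : x[j]! < u := hu _ (mem_of_ge hj')
    have h2 : y[j]! < v := hv _ (mem_of_ge (show j < y.length by omega))
    constructor <;> intro hh <;> omega
  · have hi'' : i = x.length := by omega
    have hj'' : j = x.length := by omega
    subst hi''; subst hj''
    rw [ge_concat, hvv]
    simp

/-- If `π = aαbβc` has exactly three left-to-right maxima `a, b, c` with `c`
maximal and final, and `β` nonempty, then
`B⁻¹(Av(aαbβc)) = B⁻¹(Av(aαbβ))`. -/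
theorem preimage_three_ltr_max_last (a b c : ℕ) (α β : List ℕ)
    (hπ : IsPermList (a :: α ++ b :: β ++ [c]))
    (hc : c = (a :: α ++ b :: β ++ [c]).length)
    (hab : a < b) (hbc : b < c)
    (hα : ∀ x ∈ α, x < a) (hβ : ∀ x ∈ β, x < b) (hβne : β ≠ []) :
    ∀ σ : List ℕ, IsPermList σ →
      (Avoids (bubble σ) (a :: α ++ b :: β ++ [c]) ↔
        Avoids (bubble σ) (a :: α ++ b :: β)) := by
  intro σ hσ
  obtain ⟨β', e, rfl⟩ := β.eq_nil_or_concat.resolve_left hβne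
  simp only [List.concat_eq_append] at hβ ⊢
  have he : e < b := hβ e (by simp)
  have hsplit : a :: α ++ b :: (β' ++ [e]) ++ [c] = (a :: α ++ b :: (β' ++ [e])) ++ [c] := by
    simp
  have hπ'c : ∀ p ∈ a :: α ++ b :: (β' ++ [e]), p < c := by
    intro p hp
    have h1 : p = a ∨ p ∈ α ∨ p = b ∨ p ∈ β' ∨ p = e := by
      simpa [or_assoc] using hp
    rcases h1 with rfl | h1 | rfl | h1 | rfl
    · omega
    · have := hα p h1; omega
    · omega
    · have := hβ p (by simp [h1]); omega
    · omega
  have hπ'b : (a :: α ++ b :: (β' ++ [e]))[α.length + 1]! = b := by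
    rw [show a :: α ++ b :: (β' ++ [e]) = (a :: α) ++ b :: (β' ++ [e]) by simp,
      show α.length + 1 = (a :: α).length by simp]
    exact ge_mid
  have hπ'e : (a :: α ++ b :: (β' ++ [e]))[α.length + β'.length + 2]! = e := by
    rw [show a :: α ++ b :: (β' ++ [e]) = (a :: α ++ b :: β') ++ [e] by simp,
      show α.length + β'.length + 2 = (a :: α ++ b :: β').length by simp; omega]
    exact ge_concat
  rcases eq_or_ne σ [] with rfl | hσne
  · have hav : ∀ p : List ℕ, p ≠ [] → Avoids (bubble []) p := by
      rintro p hp ⟨s, hs, hiso⟩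
      have hsnil : s = [] := List.sublist_nil.mp (by simpa [bubble] using hs)
      subst hsnil
      have := hiso.1
      simp at this
      exact hp this
    constructor <;> intro _ <;> [exact hav _ (by simp); exact hav _ (by simp)]
  -- σ nonempty
  have hn1 : 1 ≤ σ.length := by
    cases σ with | nil => exact absurd rfl hσne | cons x t => simp
  have hperm : (bubble σ).Perm (List.range' 1 σ.length) := (bubble_perm σ).trans hσ
  have hmemn : ∀ x ∈ bubble σ, x ≤ σ.length := by
    intro x hx
    have := hperm.mem_iff.mp hx
    rw [List.mem_range'_1] at this
    omega
  obtain ⟨t, m, hbt, hmax⟩ := bubble_max σ hσne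
  have hmn : m = σ.length := by
    have h1 : m ≤ σ.length := hmemn m (by rw [hbt]; simp)
    have h2 : σ.length ≤ m := by
      apply hmax
      have : σ.length ∈ List.range' 1 σ.length := by rw [List.mem_range'_1]; omega
      exact hσ.mem_iff.mpr this
    omega
  subst hmn
  have hnt : σ.length ∉ t := by
    have hnd : (bubble σ).Nodup := hperm.nodup_iff.mpr (List.nodup_range' (s := 1) (n := σ.length))
    rw [hbt] at hnd
    simp [List.nodup_append] at hnd
    exact fun hh => hnd.2 _ hh rfl
  have hlt : ∀ x ∈ t, x < σ.length := by
    intro x hx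
    have h1 : x ≤ σ.length := hmemn x (by rw [hbt]; simp [hx])
    rcases lt_or_eq_of_le h1 with h | rfl
    · exact h
    · exact absurd hx hnt
  constructor
  · -- Avoids π → Avoids π'
    rintro h ⟨s, hs, hiso⟩
    rw [hbt] at hs
    obtain ⟨s₁, s₂, rfl, hs1, hs2⟩ := List.sublist_append_iff.mp hs
    rcases List.sublist_singleton.mp hs2 with rfl | rfl
    · -- s₂ = [] : extend
      simp only [List.append_nil] at hiso ⊢
      apply h
      refine ⟨s₁ ++ [σ.length], ?_, ?_⟩
      · rw [hbt]; exact hs1.append (List.Sublist.refl [σ.length])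
      · rw [hsplit]
        exact ordIso_concat hiso hπ'c (fun q hq => hlt q (hs1.subset hq))
    · -- s₂ = [σ.length] : contradiction
      exfalso
      have hs1len : s₁.length = α.length + β'.length + 2 := by
        have := hiso.1
        simp at this
        omega
      have hkey := hiso.2 (α.length + β'.length + 2) (α.length + 1)
        (by simp <;> omega) (by simp <;> omega)
      rw [hπ'b, hπ'e] at hkey
      have hsm : (s₁ ++ [σ.length])[α.length + β'.length + 2]! = σ.length := by
        rw [← hs1len]; exact ge_concat
      rw [hsm] at hkey
      have h1 : σ.length < (s₁ ++ [σ.length])[α.length + 1]! := hkey.mp he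
      have h2 : (s₁ ++ [σ.length])[α.length + 1]! ≤ σ.length := by
        apply hmemn
        rw [hbt]
        apply hs.subset
        apply mem_of_ge
        simp; omega
      omega
  · -- Avoids π' → Avoids π
    rintro h ⟨s, hs, hiso⟩
    rw [hsplit] at hiso
    obtain ⟨s', x, hsx⟩ := s.eq_nil_or_concat.resolve_left (by
      intro hnil
      subst hnil
      have := hiso.1
      simp at this)
    rw [List.concat_eq_append] at hsx
    subst hsx
    exact h ⟨s', (List.sublist_append_left s' [x]).trans hs, ordIso_prefix hiso⟩
end

section
/- A permutation σ satisfies B(σ) ∈ Av(231) if and only if σ avoids all four patterns 3241, 2341, 4231, 2431. Consequently the set of permutations sortable by one pass of bubble sort followed by one pass of stack sort is Av(3241, 2341, 4231, 2431). -/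
/-- Auxiliary function for one pass of stack sort. -/
def ssAux : List ℕ → List ℕ → List ℕ
  | [], stack => stack
  | a :: t, stack =>
      stack.takeWhile (· < a) ++ ssAux t (a :: stack.dropWhile (· < a))

/-- One pass of stack sort: `S(ε) = ε`, `S(αnβ) = S(α)S(β)n`. -/
def stackSort (σ : List ℕ) : List ℕ := ssAux σ []



/-- carry form of bubble -/
def bub1 : ℕ → List ℕ → List ℕ
  | c, [] => [c]
  | c, x :: t => if c < x then c :: bub1 x t else x :: bub1 c t

lemma bubble_eq_bub1 (a : ℕ) (t : List ℕ) : bubble (a :: t) = bub1 a t := by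
  induction t generalizing a with
  | nil => simp [bubble, bub1]
  | cons b t ih =>
    simp only [bubble, bub1]
    by_cases h : a < b <;> simp [h, ih]

lemma bub1_perm (c : ℕ) (l : List ℕ) : (bub1 c l).Perm (c :: l) := by
  induction l generalizing c with
  | nil => rfl
  | cons x t ih =>
    simp only [bub1]
    by_cases h : c < x <;> simp only [h, if_true, if_false]
    · exact (ih x).cons c
    · exact ((ih c).cons x).trans (List.Perm.swap c x t)

lemma bub1_last (c : ℕ) (l : List ℕ) :
    ∃ P M, bub1 c l = P ++ [M] ∧ c ≤ M ∧ ∀ x ∈ l, x ≤ M := by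
  induction l generalizing c with
  | nil => exact ⟨[], c, rfl, le_rfl, by simp⟩
  | cons x t ih =>
    simp only [bub1]
    by_cases h : c < x
    · obtain ⟨P, M, hP, hc, hall⟩ := ih x
      refine ⟨c :: P, M, by simp [h, hP], le_of_lt (lt_of_lt_of_le h hc), ?_⟩
      intro y hy
      rcases List.mem_cons.1 hy with h' | h'
      · omega
      · exact hall y h'
    · obtain ⟨P, M, hP, hc, hall⟩ := ih c
      refine ⟨x :: P, M, by simp [h, hP], hc, ?_⟩
      intro y hy
      rcases List.mem_cons.1 hy with h' | h'
      · omega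
      · exact hall y h'

lemma bub1_big (c : ℕ) (l : List ℕ) (h : ∀ x ∈ l, x < c) : bub1 c l = l ++ [c] := by
  induction l with
  | nil => rfl
  | cons x t ih =>
    have hx : x < c := h x (by simp)
    simp only [bub1, Nat.not_lt_of_lt hx, if_neg (by omega : ¬ c < x)]
    rw [ih (fun y hy => h y (by simp [hy]))]; rfl

lemma bub1_split (c n : ℕ) (l l2 : List ℕ) (h : ∀ x ∈ l ++ l2, x < n) (hc : c < n) :
    bub1 c (l ++ n :: l2) = bub1 c l ++ l2 ++ [n] := by
  induction l generalizing c with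
  | nil =>
    simp only [List.nil_append, bub1, if_pos hc]
    rw [bub1_big n l2 (fun x hx => h x (by simp [hx]))]
    simp [bub1]
  | cons x t ih =>
    have hx : x < n := h x (by simp)
    simp only [List.cons_append, bub1, List.append_eq]
    by_cases hcx : c < x <;> simp only [hcx, if_true, if_false]
    · rw [ih x (fun y hy => h y (by simp at hy ⊢; tauto)) hx]; simp
    · rw [ih c (fun y hy => h y (by simp at hy ⊢; tauto)) hc]; simp

lemma bubble_decomp (n : ℕ) (α β : List ℕ) (h : ∀ x ∈ α ++ β, x < n) :
    bubble (α ++ n :: β) = bubble α ++ β ++ [n] := by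
  cases α with
  | nil =>
    simp only [List.nil_append, bubble_eq_bub1]
    rw [bub1_big n β (fun x hx => h x (by simp [hx]))]
    simp [bubble]
  | cons a t =>
    simp only [List.cons_append, bubble_eq_bub1]
    exact bub1_split a n t β (fun y hy => h y (by simp at hy ⊢; tauto))
      (h a (by simp))




lemma tw_append (a : ℕ) (s1 s2 : List ℕ) (h : ∀ y ∈ s2, ¬ y < a) :
    (s1 ++ s2).takeWhile (· < a) = s1.takeWhile (· < a) := by
  induction s1 with
  | nil =>
    cases s2 with
    | nil => rfl
    | cons y t => simp [List.takeWhile, decide_eq_true_eq, h y (by simp)]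
  | cons x t ih =>
    simp only [List.cons_append, List.takeWhile]
    by_cases hx : x < a <;> simp [hx, ih]

lemma dw_append (a : ℕ) (s1 s2 : List ℕ) (h : ∀ y ∈ s2, ¬ y < a) :
    (s1 ++ s2).dropWhile (· < a) = s1.dropWhile (· < a) ++ s2 := by
  induction s1 with
  | nil =>
    cases s2 with
    | nil => rfl
    | cons y t => simp [List.dropWhile, decide_eq_true_eq, h y (by simp)]
  | cons x t ih =>
    simp only [List.cons_append, List.dropWhile]
    by_cases hx : x < a <;> simp [hx, ih]

lemma ssAux_big (l s1 s2 : List ℕ) (h : ∀ x ∈ l, ∀ y ∈ s2, x < y) :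
    ssAux l (s1 ++ s2) = ssAux l s1 ++ s2 := by
  induction l generalizing s1 with
  | nil => rfl
  | cons a t ih =>
    have ha : ∀ y ∈ s2, ¬ y < a := fun y hy => by
      have := h a (by simp) y hy; omega
    simp only [ssAux, tw_append a s1 s2 ha, dw_append a s1 s2 ha]
    rw [show a :: (s1.dropWhile (· < a) ++ s2) = (a :: s1.dropWhile (· < a)) ++ s2 from rfl,
      ih (a :: s1.dropWhile (· < a)) (fun x hx => h x (by simp [hx]))]
    simp

lemma ssAux_decomp (n : ℕ) (α β s : List ℕ) (hαβ : ∀ x ∈ α ++ β, x < n)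
    (hs : ∀ x ∈ s, x < n) :
    ssAux (α ++ n :: β) s = ssAux α s ++ ssAux β [] ++ [n] := by
  induction α generalizing s with
  | nil =>
    simp only [List.nil_append, ssAux]
    rw [List.takeWhile_eq_self_iff.2 (by intro x hx; simpa using hs x hx),
      List.dropWhile_eq_nil_iff.2 (by intro x hx; simpa using hs x hx)]
    rw [show ([n] : List ℕ) = [] ++ [n] from rfl,
      ssAux_big β [] [n] (fun x hx y hy => by simp at hy; subst hy; exact hαβ x (by simp [hx]))]
    simp
  | cons a t ih =>
    simp only [List.cons_append, ssAux, List.append_eq]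
    rw [ih (a :: s.dropWhile (· < a))
      (fun x hx => hαβ x (by simp at hx ⊢; tauto))
      (by intro z hz
          rcases List.mem_cons.1 hz with h' | h'
          · subst h'; exact hαβ z (by simp)
          · exact hs z ((List.dropWhile_sublist _).subset h'))]
    simp

lemma ssAux_perm (l s : List ℕ) : (ssAux l s).Perm (l ++ s) := by
  induction l generalizing s with
  | nil => simp [ssAux]
  | cons a t ih =>
    simp only [ssAux, List.cons_append]
    refine List.Perm.trans (((ih _).append_left _)) ?_
    have h1 : (s.takeWhile (· < a) ++ (t ++ a :: s.dropWhile (· < a))).Perm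
        (a :: (s.takeWhile (· < a) ++ t ++ s.dropWhile (· < a))) := by
      rw [show s.takeWhile (· < a) ++ (t ++ a :: s.dropWhile (· < a))
          = (s.takeWhile (· < a) ++ t) ++ a :: s.dropWhile (· < a) by simp]
      exact List.perm_middle
    refine h1.trans (List.Perm.cons a ?_)
    have h2 : (s.takeWhile (· < a) ++ t ++ s.dropWhile (· < a)).Perm
        (t ++ s.takeWhile (· < a) ++ s.dropWhile (· < a)) :=
      List.perm_append_comm.append_right _
    refine h2.trans ?_
    rw [List.append_assoc, List.takeWhile_append_dropWhile]

lemma stackSort_perm (l : List ℕ) : (stackSort l).Perm l := by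
  simpa [stackSort] using ssAux_perm l []

lemma stackSort_decomp (n : ℕ) (α β : List ℕ) (h : ∀ x ∈ α ++ β, x < n) :
    stackSort (α ++ n :: β) = stackSort α ++ stackSort β ++ [n] :=
  ssAux_decomp n α β [] h (by simp)





def P231 (τ : List ℕ) : Prop := ∃ a b c, List.Sublist [a,b,c] τ ∧ c < a ∧ a < b

def P4 (τ : List ℕ) : Prop :=
  ∃ p q r s, List.Sublist [p,q,r,s] τ ∧ s < p ∧ s < q ∧ (p < r ∨ q < r)

def Q3241 (τ : List ℕ) : Prop := ∃ a b c d, List.Sublist [a,b,c,d] τ ∧ d < b ∧ b < a ∧ a < c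
def Q2341 (τ : List ℕ) : Prop := ∃ a b c d, List.Sublist [a,b,c,d] τ ∧ d < a ∧ a < b ∧ b < c
def Q4231 (τ : List ℕ) : Prop := ∃ a b c d, List.Sublist [a,b,c,d] τ ∧ d < b ∧ b < c ∧ c < a
def Q2431 (τ : List ℕ) : Prop := ∃ a b c d, List.Sublist [a,b,c,d] τ ∧ d < a ∧ a < c ∧ c < b

lemma pc231 (τ : List ℕ) : PContains [2,3,1] τ ↔ P231 τ := by
  constructor
  · rintro ⟨s, hsub, hlen, hord⟩
    rcases s with _|⟨a,_|⟨b,_|⟨c,_|⟨d,s⟩⟩⟩⟩ <;> simp at hlen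
    have h1 := hord 0 1 (by simp) (by simp)
    have h2 := hord 2 0 (by simp) (by simp)
    simp [List.getElem!_cons_zero, List.getElem!_cons_succ] at h1 h2
    exact ⟨a, b, c, hsub, h2, h1⟩
  · rintro ⟨a, b, c, hsub, h1, h2⟩
    refine ⟨[a,b,c], hsub, by simp, ?_⟩
    intro i j hi hj
    simp at hi hj
    interval_cases i <;> interval_cases j <;>
      simp [List.getElem!_cons_zero, List.getElem!_cons_succ] <;> omega


lemma pc3241 (τ : List ℕ) : PContains [3,2,4,1] τ ↔ Q3241 τ := by
  constructor
  · rintro ⟨s, hsub, hlen, hord⟩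
    rcases s with _|⟨a,_|⟨b,_|⟨c,_|⟨d,_|⟨e,s⟩⟩⟩⟩⟩ <;> simp at hlen
    have h1 := hord 3 1 (by simp) (by simp)
    have h2 := hord 1 0 (by simp) (by simp)
    have h3 := hord 0 2 (by simp) (by simp)
    simp [List.getElem!_cons_zero, List.getElem!_cons_succ] at h1 h2 h3
    exact ⟨a, b, c, d, hsub, h1, h2, h3⟩
  · rintro ⟨a, b, c, d, hsub, h1, h2, h3⟩
    refine ⟨[a,b,c,d], hsub, by simp, ?_⟩
    intro i j hi hj
    simp at hi hj
    interval_cases i <;> interval_cases j <;>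
      simp [List.getElem!_cons_zero, List.getElem!_cons_succ] <;> omega

lemma pc2341 (τ : List ℕ) : PContains [2,3,4,1] τ ↔ Q2341 τ := by
  constructor
  · rintro ⟨s, hsub, hlen, hord⟩
    rcases s with _|⟨a,_|⟨b,_|⟨c,_|⟨d,_|⟨e,s⟩⟩⟩⟩⟩ <;> simp at hlen
    have h1 := hord 3 0 (by simp) (by simp)
    have h2 := hord 0 1 (by simp) (by simp)
    have h3 := hord 1 2 (by simp) (by simp)
    simp [List.getElem!_cons_zero, List.getElem!_cons_succ] at h1 h2 h3
    exact ⟨a, b, c, d, hsub, h1, h2, h3⟩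
  · rintro ⟨a, b, c, d, hsub, h1, h2, h3⟩
    refine ⟨[a,b,c,d], hsub, by simp, ?_⟩
    intro i j hi hj
    simp at hi hj
    interval_cases i <;> interval_cases j <;>
      simp [List.getElem!_cons_zero, List.getElem!_cons_succ] <;> omega

lemma pc4231 (τ : List ℕ) : PContains [4,2,3,1] τ ↔ Q4231 τ := by
  constructor
  · rintro ⟨s, hsub, hlen, hord⟩
    rcases s with _|⟨a,_|⟨b,_|⟨c,_|⟨d,_|⟨e,s⟩⟩⟩⟩⟩ <;> simp at hlen
    have h1 := hord 3 1 (by simp) (by simp)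
    have h2 := hord 1 2 (by simp) (by simp)
    have h3 := hord 2 0 (by simp) (by simp)
    simp [List.getElem!_cons_zero, List.getElem!_cons_succ] at h1 h2 h3
    exact ⟨a, b, c, d, hsub, h1, h2, h3⟩
  · rintro ⟨a, b, c, d, hsub, h1, h2, h3⟩
    refine ⟨[a,b,c,d], hsub, by simp, ?_⟩
    intro i j hi hj
    simp at hi hj
    interval_cases i <;> interval_cases j <;>
      simp [List.getElem!_cons_zero, List.getElem!_cons_succ] <;> omega

lemma pc2431 (τ : List ℕ) : PContains [2,4,3,1] τ ↔ Q2431 τ := by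
  constructor
  · rintro ⟨s, hsub, hlen, hord⟩
    rcases s with _|⟨a,_|⟨b,_|⟨c,_|⟨d,_|⟨e,s⟩⟩⟩⟩⟩ <;> simp at hlen
    have h1 := hord 3 0 (by simp) (by simp)
    have h2 := hord 0 2 (by simp) (by simp)
    have h3 := hord 2 1 (by simp) (by simp)
    simp [List.getElem!_cons_zero, List.getElem!_cons_succ] at h1 h2 h3
    exact ⟨a, b, c, d, hsub, h1, h2, h3⟩
  · rintro ⟨a, b, c, d, hsub, h1, h2, h3⟩
    refine ⟨[a,b,c,d], hsub, by simp, ?_⟩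
    intro i j hi hj
    simp at hi hj
    interval_cases i <;> interval_cases j <;>
      simp [List.getElem!_cons_zero, List.getElem!_cons_succ] <;> omega


lemma mem_pair_sublist {a b : ℕ} {l : List ℕ} (ha : a ∈ l) (hb : b ∈ l) (hab : a ≠ b) :
    List.Sublist [a,b] l ∨ List.Sublist [b,a] l := by
  induction l with
  | nil => simp at ha
  | cons x t ih =>
    by_cases hx : x = a
    · subst hx
      have hb' : b ∈ t := by
        rcases List.mem_cons.1 hb with h | h
        · exact absurd h.symm hab
        · exact h
      left
      exact (List.singleton_sublist.2 hb').cons₂ x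
    · by_cases hy : x = b
      · subst hy
        have ha' : a ∈ t := by
          rcases List.mem_cons.1 ha with h | h
          · omega
          · exact h
        right
        exact (List.singleton_sublist.2 ha').cons₂ x
      · have ha' : a ∈ t := by
          rcases List.mem_cons.1 ha with h | h
          · exact absurd h.symm hx
          · exact h
        have hb' : b ∈ t := by
          rcases List.mem_cons.1 hb with h | h
          · exact absurd h.symm hy
          · exact h
        rcases ih ha' hb' with h | h
        · exact Or.inl (h.cons x)
        · exact Or.inr (h.cons x)

lemma P231_append (L1 L2 : List ℕ) :
    P231 (L1 ++ L2) ↔ P231 L1 ∨ P231 L2 ∨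
      (∃ a b c, List.Sublist [a,b] L1 ∧ c ∈ L2 ∧ c < a ∧ a < b) ∨
      (∃ a b c, a ∈ L1 ∧ List.Sublist [b,c] L2 ∧ c < a ∧ a < b) := by
  constructor
  · rintro ⟨a, b, c, hs, h1, h2⟩
    rw [List.sublist_append_iff] at hs
    obtain ⟨u, v, huv, hu, hv⟩ := hs
    rcases u with _ | ⟨x, _ | ⟨y, _ | ⟨z, _ | ⟨w, u⟩⟩⟩⟩ <;> simp at huv
    · subst huv
      exact Or.inr (Or.inl ⟨a, b, c, hv, h1, h2⟩)
    · obtain ⟨rfl, rfl⟩ := huv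
      exact Or.inr (Or.inr (Or.inr ⟨a, b, c, List.singleton_sublist.1 hu, hv, h1, h2⟩))
    · obtain ⟨rfl, rfl, rfl⟩ := huv
      exact Or.inr (Or.inr (Or.inl ⟨a, b, c, hu, List.singleton_sublist.1 hv, h1, h2⟩))
    · obtain ⟨rfl, rfl, rfl, rfl⟩ := huv
      exact Or.inl ⟨a, b, c, hu, h1, h2⟩
  · rintro (⟨a, b, c, h, h1, h2⟩ | ⟨a, b, c, h, h1, h2⟩ |
      ⟨a, b, c, h, hc, h1, h2⟩ | ⟨a, b, c, ha, h, h1, h2⟩)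
    · exact ⟨a, b, c, h.trans (List.sublist_append_left L1 L2), h1, h2⟩
    · exact ⟨a, b, c, h.trans (List.sublist_append_right L1 L2), h1, h2⟩
    · exact ⟨a, b, c, h.append (List.singleton_sublist.2 hc), h1, h2⟩
    · exact ⟨a, b, c, (List.singleton_sublist.2 ha).append h, h1, h2⟩

lemma P231_snoc (L : List ℕ) (n : ℕ) (h : ∀ x ∈ L, x < n) :
    P231 (L ++ [n]) ↔ P231 L := by
  rw [P231_append]
  constructor
  · rintro (h' | ⟨a, b, c, hs, _, _⟩ | ⟨a, b, c, hs, hc, h1, h2⟩ | ⟨a, b, c, ha, hs, h1, h2⟩)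
    · exact h'
    · have := hs.length_le; simp at this
    · simp at hc
      subst hc
      have : a < c := h a (hs.subset (by simp))
      omega
    · have := hs.length_le; simp at this
  · exact fun h' => Or.inl h'

lemma P231_middle (n : ℕ) (α β : List ℕ) (hα : ∀ x ∈ α, x < n) (hβ : ∀ x ∈ β, x < n) :
    P231 (α ++ n :: β) ↔ P231 α ∨ P231 β ∨ ∃ x ∈ α, ∃ y ∈ β, y < x := by
  constructor
  · rintro ⟨a, b, c, hs, h1, h2⟩
    rw [List.sublist_append_iff] at hs
    obtain ⟨u, v, huv, hu, hv⟩ := hs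
    rw [List.sublist_cons_iff] at hv
    rcases u with _ | ⟨x, _ | ⟨y, _ | ⟨z, _ | ⟨w, u⟩⟩⟩⟩ <;> simp at huv
    · -- u = [], v = [a,b,c]
      subst huv
      rcases hv with hv | ⟨r, hr, hrs⟩
      · exact Or.inr (Or.inl ⟨a, b, c, hv, h1, h2⟩)
      · injection hr with e1 e2
        subst e2
        have : b < n := hβ b (hrs.subset (by simp))
        omega
    · -- u = [a], v = [b,c]
      obtain ⟨rfl, rfl⟩ := huv
      have haα : a ∈ α := List.singleton_sublist.1 hu
      rcases hv with hv | ⟨r, hr, hrs⟩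
      · have : c ∈ β := hv.subset (by simp)
        exact Or.inr (Or.inr ⟨a, haα, c, this, h1⟩)
      · injection hr with e1 e2
        subst e2
        have : c ∈ β := hrs.subset (by simp)
        exact Or.inr (Or.inr ⟨a, haα, c, this, h1⟩)
    · -- u = [a,b], v = [c]
      obtain ⟨rfl, rfl, rfl⟩ := huv
      have haα : a ∈ α := hu.subset (by simp)
      rcases hv with hv | ⟨r, hr, hrs⟩
      · have : c ∈ β := List.singleton_sublist.1 hv
        exact Or.inr (Or.inr ⟨a, haα, c, this, h1⟩)
      · injection hr with e1 e2
        have : a < n := hα a haα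
        omega
    · obtain ⟨rfl, rfl, rfl, rfl⟩ := huv
      exact Or.inl ⟨a, b, c, hu, h1, h2⟩
  · rintro (⟨a, b, c, hs, h1, h2⟩ | ⟨a, b, c, hs, h1, h2⟩ | ⟨x, hx, y, hy, hxy⟩)
    · exact ⟨a, b, c, hs.trans (List.sublist_append_left α (n :: β)), h1, h2⟩
    · refine ⟨a, b, c, hs.trans ?_, h1, h2⟩
      exact (List.sublist_cons_self n β).trans (List.sublist_append_right α (n :: β))
    · refine ⟨x, n, y, ?_, hxy, hα x hx⟩
      have : List.Sublist ([x] ++ n :: [y]) (α ++ n :: β) :=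
        (List.singleton_sublist.2 hx).append ((List.singleton_sublist.2 hy).cons₂ n)
      simpa using this

lemma P4_middle (n : ℕ) (α β : List ℕ) (hα : ∀ x ∈ α, x < n) (hβ : ∀ x ∈ β, x < n) :
    P4 (α ++ n :: β) ↔ P4 α ∨ P231 β ∨
      (∃ p r s, p ∈ α ∧ List.Sublist [r,s] β ∧ s < p ∧ p < r) ∨
      (∃ p q s, List.Sublist [p,q] α ∧ s ∈ β ∧ s < p ∧ s < q) := by
  constructor
  · rintro ⟨p, q, r, s, hs, h1, h2, h3⟩
    rw [List.sublist_append_iff] at hs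
    obtain ⟨u, v, huv, hu, hv⟩ := hs
    rw [List.sublist_cons_iff] at hv
    rcases u with _ | ⟨x, _ | ⟨y, _ | ⟨z, _ | ⟨w, _ | ⟨w', u⟩⟩⟩⟩⟩ <;> simp at huv
    · -- u = [], v = [p,q,r,s]
      subst huv
      rcases hv with hv | ⟨t, ht, hts⟩
      · -- P4 β, absorb into P231 β
        rcases h3 with h3 | h3
        · refine Or.inr (Or.inl ⟨p, r, s, ?_, h1, h3⟩)
          refine List.Sublist.trans ?_ hv
          exact ((List.Sublist.refl [r,s]).cons q).cons₂ p
        · refine Or.inr (Or.inl ⟨q, r, s, ?_, h2, h3⟩)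
          refine List.Sublist.trans ?_ hv
          exact (List.Sublist.refl [q,r,s]).cons p
      · -- p = n
        injection ht with e1 e2
        subst e2
        have hr : r < n := hβ r (hts.subset (by simp))
        have hq : q < r := by omega
        exact Or.inr (Or.inl ⟨q, r, s, hts, h2, hq⟩)
    · -- u = [p], v = [q,r,s]
      obtain ⟨rfl, rfl⟩ := huv
      have hpα : p ∈ α := List.singleton_sublist.1 hu
      rcases hv with hv | ⟨t, ht, hts⟩
      · rcases h3 with h3 | h3
        · refine Or.inr (Or.inr (Or.inl ⟨p, r, s, hpα, ?_, h1, h3⟩))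
          exact ((List.Sublist.refl [r,s]).cons q).trans hv
        · refine Or.inr (Or.inl ⟨q, r, s, ?_, h2, h3⟩)
          exact hv
      · -- q = n
        injection ht with e1 e2
        subst e2
        have hr : r < n := hβ r (hts.subset (by simp))
        have hpr : p < r := by omega
        exact Or.inr (Or.inr (Or.inl ⟨p, r, s, hpα, hts, h1, hpr⟩))
    · -- u = [p,q], v = [r,s]
      obtain ⟨rfl, rfl, rfl⟩ := huv
      rcases hv with hv | ⟨t, ht, hts⟩
      · have hsβ : s ∈ β := hv.subset (by simp)
        exact Or.inr (Or.inr (Or.inr ⟨p, q, s, hu, hsβ, h1, h2⟩))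
      · injection ht with e1 e2
        subst e2
        have hsβ : s ∈ β := hts.subset (by simp)
        exact Or.inr (Or.inr (Or.inr ⟨p, q, s, hu, hsβ, h1, h2⟩))
    · -- u = [p,q,r], v = [s]
      obtain ⟨rfl, rfl, rfl, rfl⟩ := huv
      rcases hv with hv | ⟨t, ht, hts⟩
      · have hsβ : s ∈ β := List.singleton_sublist.1 hv
        refine Or.inr (Or.inr (Or.inr ⟨p, q, s, ?_, hsβ, h1, h2⟩))
        exact (((List.Sublist.refl ([] : List ℕ)).cons r).cons₂ q).cons₂ p |>.trans hu
      · injection ht with e1 e2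
        have hpα : p ∈ α := hu.subset (by simp)
        have := hα p hpα
        omega
    · -- u = [p,q,r,s], v = []
      obtain ⟨rfl, rfl, rfl, rfl, rfl⟩ := huv
      exact Or.inl ⟨p, q, r, s, hu, h1, h2, h3⟩
  · rintro (⟨p, q, r, s, hs, h1, h2, h3⟩ | ⟨a, b, c, hs, h1, h2⟩ |
      ⟨p, r, s, hp, hs, h1, h2⟩ | ⟨p, q, s, hpq, hsβ, h1, h2⟩)
    · exact ⟨p, q, r, s, hs.trans (List.sublist_append_left α (n :: β)), h1, h2, h3⟩
    · refine ⟨n, a, b, c, ?_, hβ c (hs.subset (by simp)), h1, Or.inr h2⟩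
      refine List.Sublist.trans ?_ (List.sublist_append_right α (n :: β))
      exact hs.cons₂ n
    · refine ⟨p, n, r, s, ?_, h1, hβ s (hs.subset (by simp)), Or.inl h2⟩
      have : List.Sublist ([p] ++ n :: [r, s]) (α ++ n :: β) :=
        (List.singleton_sublist.2 hp).append (hs.cons₂ n)
      simpa using this
    · refine ⟨p, q, n, s, ?_, h1, h2, Or.inl (hα p (hpq.subset (by simp)))⟩
      have : List.Sublist ([p, q] ++ n :: [s]) (α ++ n :: β) :=
        hpq.append ((List.singleton_sublist.2 hsβ).cons₂ n)
      simpa using this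

lemma P4_iff_Q (σ : List ℕ) (h : σ.Nodup) :
    P4 σ ↔ Q3241 σ ∨ Q2341 σ ∨ Q4231 σ ∨ Q2431 σ := by
  constructor
  · rintro ⟨p, q, r, s, hs, h1, h2, h3⟩
    have hnd : ([p, q, r, s] : List ℕ).Nodup := hs.nodup h
    simp [List.nodup_cons] at hnd
    obtain ⟨⟨hpq, hpr, _⟩, ⟨hqr, _⟩, _⟩ := hnd
    by_cases hcase : p < q
    · by_cases hc2 : q < r
      · exact Or.inr (Or.inl ⟨p, q, r, s, hs, h1, hcase, hc2⟩)
      · have hpr' : p < r := by omega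
        have : r < q := by omega
        exact Or.inr (Or.inr (Or.inr ⟨p, q, r, s, hs, h1, hpr', this⟩))
    · have hqp : q < p := by omega
      by_cases hc2 : p < r
      · exact Or.inl ⟨p, q, r, s, hs, h2, hqp, hc2⟩
      · have : q < r := by omega
        have hrp : r < p := by omega
        exact Or.inr (Or.inr (Or.inl ⟨p, q, r, s, hs, h2, this, hrp⟩))
  · rintro (⟨a, b, c, d, hs, h1, h2, h3⟩ | ⟨a, b, c, d, hs, h1, h2, h3⟩ |
      ⟨a, b, c, d, hs, h1, h2, h3⟩ | ⟨a, b, c, d, hs, h1, h2, h3⟩)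
    · exact ⟨a, b, c, d, hs, by omega, h1, by omega⟩
    · exact ⟨a, b, c, d, hs, h1, by omega, by omega⟩
    · exact ⟨a, b, c, d, hs, by omega, h1, by omega⟩
    · exact ⟨a, b, c, d, hs, h1, by omega, by omega⟩

lemma exists_max (l : List ℕ) (h : l ≠ []) : ∃ m ∈ l, ∀ x ∈ l, x ≤ m := by
  induction l with
  | nil => simp at h
  | cons a t ih =>
    rcases t with _ | ⟨b, t'⟩
    · exact ⟨a, by simp, by simp⟩
    · obtain ⟨m, hm, hall⟩ := ih (by simp)
      by_cases hc : a ≤ m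
      · refine ⟨m, by simp [hm], ?_⟩
        intro x hx
        rcases List.mem_cons.1 hx with rfl | hx
        · exact hc
        · exact hall x hx
      · refine ⟨a, by simp, ?_⟩
        intro x hx
        rcases List.mem_cons.1 hx with rfl | hx
        · exact le_rfl
        · exact le_trans (hall x hx) (by omega)

lemma max_decomp (σ : List ℕ) (hne : σ ≠ []) (hnd : σ.Nodup) :
    ∃ α n β, σ = α ++ n :: β ∧ (∀ x ∈ α, x < n) ∧ (∀ x ∈ β, x < n) := by
  obtain ⟨m, hm, hall⟩ := exists_max σ hne
  obtain ⟨α, β, rfl⟩ := List.append_of_mem hm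
  refine ⟨α, m, β, rfl, ?_, ?_⟩
  · intro x hx
    have hle : x ≤ m := hall x (by simp [hx])
    have hne' : x ≠ m := by
      intro hxm
      exact (List.disjoint_of_nodup_append hnd) hx (by simp [hxm])
    omega
  · intro x hx
    have hle : x ≤ m := hall x (by simp [hx])
    have hmβ : m ∉ β := by
      have := (List.nodup_append.1 hnd).2.1
      simp [List.nodup_cons] at this
      exact this.1
    have hne' : x ≠ m := fun hxm => hmβ (hxm ▸ hx)
    omega




lemma P231_nil : ¬ P231 [] := by
  rintro ⟨a, b, c, hs, -, -⟩
  have := hs.length_le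
  simp at this

lemma P4_nil : ¬ P4 [] := by
  rintro ⟨p, q, r, s, hs, -, -, -⟩
  have := hs.length_le
  simp at this

lemma SS_main : ∀ (N : ℕ) (σ : List ℕ), σ.length ≤ N → σ.Nodup →
    (List.Pairwise (· < ·) (stackSort σ) ↔ ¬ P231 σ) := by
  intro N
  induction N with
  | zero =>
    intro σ hlen _
    have hσ : σ = [] := List.eq_nil_of_length_eq_zero (by omega)
    subst hσ
    simpa [stackSort, ssAux] using P231_nil
  | succ N ih =>
    intro σ hlen hnd
    by_cases hne : σ = []
    · subst hne
      simpa [stackSort, ssAux] using P231_nil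
    · obtain ⟨α, n, β, rfl, hα, hβ⟩ := max_decomp σ hne hnd
      have hndα : α.Nodup := (List.nodup_append.1 hnd).1
      have hndnβ : (n :: β).Nodup := (List.nodup_append.1 hnd).2.1
      have hndβ : β.Nodup := hndnβ.of_cons
      have hdisj : α.Disjoint (n :: β) := List.disjoint_of_nodup_append hnd
      have hlen' : α.length + (β.length + 1) ≤ N + 1 := by
        simpa [List.length_append] using hlen
      have hlenα : α.length ≤ N := by omega
      have hlenβ : β.length ≤ N := by omega
      have hall : ∀ x ∈ α ++ β, x < n := by
        intro x hx
        rcases List.mem_append.1 hx with h | h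
        · exact hα x h
        · exact hβ x h
      rw [stackSort_decomp n α β hall, List.pairwise_append, List.pairwise_append,
        P231_middle n α β hα hβ]
      have permα := stackSort_perm α
      have permβ := stackSort_perm β
      constructor
      · rintro ⟨⟨pα, pβ, cross⟩, -, -⟩
        rintro (h | h | ⟨x, hx, y, hy, hxy⟩)
        · exact ((ih α hlenα hndα).1 pα) h
        · exact ((ih β hlenβ hndβ).1 pβ) h
        · have hx' : x ∈ stackSort α := permα.mem_iff.2 hx
          have hy' : y ∈ stackSort β := permβ.mem_iff.2 hy
          have := cross x hx' y hy'
          omega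
      · intro hno
        have h1 : ¬ P231 α := fun h => hno (Or.inl h)
        have h2 : ¬ P231 β := fun h => hno (Or.inr (Or.inl h))
        refine ⟨⟨(ih α hlenα hndα).2 h1, (ih β hlenβ hndβ).2 h2, ?_⟩,
          List.pairwise_singleton _ _, ?_⟩
        · intro x hx y hy
          have hxα : x ∈ α := permα.mem_iff.1 hx
          have hyβ : y ∈ β := permβ.mem_iff.1 hy
          have hxy : x ≠ y := by
            intro h
            exact hdisj hxα (by simp [h, hyβ])
          have : ¬ y < x := fun h => hno (Or.inr (Or.inr ⟨x, hxα, y, hyβ, h⟩))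
          omega
        · intro x hx y hy
          simp at hy
          subst hy
          rcases List.mem_append.1 hx with h | h
          · exact hα x (permα.mem_iff.1 h)
          · exact hβ x (permβ.mem_iff.1 h)

lemma bubble_pair (α : List ℕ) (hnd : α.Nodup) (c : ℕ) :
    (∃ a b, List.Sublist [a, b] (bubble α) ∧ c < a ∧ a < b) ↔
    (∃ p q, List.Sublist [p, q] α ∧ c < p ∧ c < q) := by
  constructor
  · rintro ⟨a, b, hs, h1, h2⟩
    have ha : a ∈ α := (bubble_perm α).subset (hs.subset (by simp))
    have hb : b ∈ α := (bubble_perm α).subset (hs.subset (by simp))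
    have hab : a ≠ b := by omega
    rcases mem_pair_sublist ha hb hab with h | h
    · exact ⟨a, b, h, h1, by omega⟩
    · exact ⟨b, a, h, by omega, h1⟩
  · rintro ⟨p, q, hs, h1, h2⟩
    have hp : p ∈ α := hs.subset (by simp)
    have hq : q ∈ α := hs.subset (by simp)
    have hpq : p ≠ q := by
      have := hs.nodup hnd
      simp at this
      exact this
    rcases α with _ | ⟨x, t⟩
    · simp at hp
    obtain ⟨P, M, hPM, hxM, hallM⟩ := bub1_last x t
    have hall2 : ∀ y ∈ x :: t, y ≤ M := by
      intro y hy
      rcases List.mem_cons.1 hy with rfl | hy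
      · exact hxM
      · exact hallM y hy
    have key : ∀ a, a ∈ (x :: t) → a ≠ M → c < a →
        ∃ a b, List.Sublist [a, b] (bubble (x :: t)) ∧ c < a ∧ a < b := by
      intro a haα haM hca
      have haB : a ∈ bub1 x t := (bub1_perm x t).mem_iff.2 haα
      rw [hPM] at haB
      have haP : a ∈ P := by
        rcases List.mem_append.1 haB with h | h
        · exact h
        · simp at h; exact absurd h haM
      refine ⟨a, M, ?_, hca, lt_of_le_of_ne (hall2 a haα) haM⟩
      rw [bubble_eq_bub1, hPM]
      have : List.Sublist ([a] ++ [M]) (P ++ [M]) :=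
        (List.singleton_sublist.2 haP).append (List.Sublist.refl [M])
      simpa using this
    by_cases hpM : p = M
    · exact key q hq (fun h => hpq (hpM.trans h.symm)) h2
    · exact key p hp hpM h1

lemma BB_main : ∀ (N : ℕ) (σ : List ℕ), σ.length ≤ N → σ.Nodup →
    (P231 (bubble σ) ↔ P4 σ) := by
  intro N
  induction N with
  | zero =>
    intro σ hlen _
    have hσ : σ = [] := List.eq_nil_of_length_eq_zero (by omega)
    subst hσ
    constructor
    · intro h; exact absurd h (by simpa [bubble] using P231_nil)
    · intro h; exact absurd h P4_nil
  | succ N ih =>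
    intro σ hlen hnd
    by_cases hne : σ = []
    · subst hne
      constructor
      · intro h; exact absurd h (by simpa [bubble] using P231_nil)
      · intro h; exact absurd h P4_nil
    · obtain ⟨α, n, β, rfl, hα, hβ⟩ := max_decomp σ hne hnd
      have hndα : α.Nodup := (List.nodup_append.1 hnd).1
      have hlen' : α.length + (β.length + 1) ≤ N + 1 := by
        simpa [List.length_append] using hlen
      have hlenα : α.length ≤ N := by omega
      have hall : ∀ x ∈ α ++ β, x < n := by
        intro x hx
        rcases List.mem_append.1 hx with h | h
        · exact hα x h
        · exact hβ x h
      have hmem : ∀ x ∈ bubble α ++ β, x < n := by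
        intro x hx
        rcases List.mem_append.1 hx with h | h
        · exact hα x ((bubble_perm α).subset h)
        · exact hβ x h
      rw [bubble_decomp n α β hall, P231_snoc _ n hmem, P231_append,
        P4_middle n α β hα hβ, ih α hlenα hndα]
      constructor
      · rintro (h | h | ⟨a, b, c, hab, hc, h1, h2⟩ | ⟨a, b, c, ha, hbc, h1, h2⟩)
        · exact Or.inl h
        · exact Or.inr (Or.inl h)
        · -- pair in bubble α, c ∈ β
          have := (bubble_pair α hndα c).1 ⟨a, b, hab, h1, h2⟩
          obtain ⟨p, q, hpq, hc1, hc2⟩ := this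
          exact Or.inr (Or.inr (Or.inr ⟨p, q, c, hpq, hc, hc1, hc2⟩))
        · exact Or.inr (Or.inr (Or.inl
            ⟨a, b, c, (bubble_perm α).subset ha, hbc, h1, h2⟩))
      · rintro (h | h | ⟨p, r, s, hp, hrs, h1, h2⟩ | ⟨p, q, s, hpq, hsβ, h1, h2⟩)
        · exact Or.inl h
        · exact Or.inr (Or.inl h)
        · exact Or.inr (Or.inr (Or.inr
            ⟨p, r, s, (bubble_perm α).mem_iff.2 hp, hrs, h1, h2⟩))
        · obtain ⟨a, b, hab, hc1, hc2⟩ :=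
            (bubble_pair α hndα s).2 ⟨p, q, hpq, h1, h2⟩
          exact Or.inr (Or.inr (Or.inl ⟨a, b, s, hab, hsβ, hc1, hc2⟩))



/-- `B(σ) ∈ Av(231)` iff `σ` avoids `3241, 2341, 4231, 2431`; consequently
the permutations sortable by one pass of bubble sort followed by one pass of
stack sort are exactly `Av(3241, 2341, 4231, 2431)`. -/
theorem bubble_then_stack_sortable :
    (∀ σ : List ℕ, IsPermList σ →
      (Avoids (bubble σ) [2, 3, 1] ↔
        (Avoids σ [3, 2, 4, 1] ∧ Avoids σ [2, 3, 4, 1] ∧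
          Avoids σ [4, 2, 3, 1] ∧ Avoids σ [2, 4, 3, 1]))) ∧
    (∀ σ : List ℕ, IsPermList σ →
      ((stackSort (bubble σ)).Chain' (· < ·) ↔
        (Avoids σ [3, 2, 4, 1] ∧ Avoids σ [2, 3, 4, 1] ∧
          Avoids σ [4, 2, 3, 1] ∧ Avoids σ [2, 4, 3, 1]))) := by
  have main1 : ∀ σ : List ℕ, σ.Nodup → (P231 (bubble σ) ↔ P4 σ) :=
    fun σ h => BB_main σ.length σ le_rfl h
  have main2 : ∀ σ : List ℕ, σ.Nodup →
      (List.Pairwise (· < ·) (stackSort σ) ↔ ¬ P231 σ) :=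
    fun σ h => SS_main σ.length σ le_rfl h
  constructor
  · intro σ hp
    have hnd : σ.Nodup := hp.nodup_iff.2 (List.nodup_range' (s := 1) (n := σ.length))
    simp only [Avoids, pc231, pc3241, pc2341, pc4231, pc2431]
    rw [main1 σ hnd, P4_iff_Q σ hnd]
    tauto
  · intro σ hp
    have hnd : σ.Nodup := hp.nodup_iff.2 (List.nodup_range' (s := 1) (n := σ.length))
    have hndb : (bubble σ).Nodup := (bubble_perm σ).nodup_iff.2 hnd
    rw [show List.Chain' (· < ·) (stackSort (bubble σ)) ↔ _ from List.isChain_iff_pairwise, main2 (bubble σ) hndb, main1 σ hnd,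
      P4_iff_Q σ hnd]
    simp only [Avoids, pc3241, pc2341, pc4231, pc2431]
    tauto
end

section
/- For each k ≥ 0, a permutation σ is sorted by k passes of bubble sort (i.e., B^k(σ) is increasing) if and only if σ avoids every permutation of length k+2 whose final term is 1; moreover B(σ) avoids all patterns of Γ_{k-1} if and only if σ avoids all patterns of Γ_k, where Γ_j is the set of all permutations of length j+2 ending in 1. -/
/-- `Γ_j`: the permutations of length `j + 2` whose final term is `1`. -/
def InGamma (j : ℕ) (π : List ℕ) : Prop :=
  IsPermList π ∧ π.length = j + 2 ∧ π.getLast? = some 1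

namespace BubbleAux

/-- The number of entries occurring before (the first occurrence of) `x` that exceed `x`. -/
def cnt (l : List ℕ) (x : ℕ) : ℕ := (l.takeWhile (· ≠ x)).countP (fun y => x < y)

lemma cnt_cons (a : ℕ) (t : List ℕ) (x : ℕ) :
    cnt (a :: t) x = if a = x then 0 else cnt t x + (if x < a then 1 else 0) := by
  by_cases h : a = x <;> simp [cnt, List.takeWhile_cons, h, List.countP_cons]

lemma bubble_perm (l : List ℕ) : (bubble l).Perm l := by
  induction l using bubble.induct with
  | case1 => simp [bubble]
  | case2 a => simp [bubble]
  | case3 a b t h ih => rw [bubble, if_pos h]; exact ih.cons a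
  | case4 a b t h ih =>
      rw [bubble, if_neg h]
      exact (ih.cons b).trans (List.Perm.swap a b t)

lemma cnt_bubble (l : List ℕ) (hl : l.Nodup) (x : ℕ) (hx : x ∈ l) :
    cnt (bubble l) x = cnt l x - 1 := by
  induction l using bubble.induct with
  | case1 => cases hx
  | case2 a =>
      rcases List.mem_singleton.1 hx with rfl
      simp [bubble, cnt_cons]
  | case3 a b t h ih =>
      rw [bubble, if_pos h]
      have hnd : (b :: t).Nodup := hl.of_cons
      have hanb : a ∉ b :: t := (List.nodup_cons.1 hl).1
      rcases List.mem_cons.1 hx with he | hx'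
      · rw [cnt_cons, if_pos he.symm, cnt_cons, if_pos he.symm]
      · have hax : a ≠ x := fun he => hanb (he ▸ hx')
        rw [cnt_cons, cnt_cons, if_neg hax, if_neg hax, ih hnd hx']
        rcases Nat.eq_zero_or_pos (cnt (b :: t) x) with h0 | hpos
        · have haltx : a < x := by
            rcases List.mem_cons.1 hx' with he | hx''
            · omega
            · have hbx : b ≠ x := fun he => (List.nodup_cons.1 hnd).1 (he ▸ hx'')
              rw [cnt_cons, if_neg hbx] at h0
              have hxb : ¬ x < b := by
                intro hlt; rw [if_pos hlt] at h0; omega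
              omega
          have : ¬ x < a := by omega
          simp [h0, this]
        · split_ifs <;> omega
  | case4 a b t h ih =>
      rw [bubble, if_neg h]
      have hnd : (b :: t).Nodup := hl.of_cons
      have hanb : a ∉ b :: t := (List.nodup_cons.1 hl).1
      have hbnt : b ∉ t := (List.nodup_cons.1 hnd).1
      have hab : a ≠ b := fun he => hanb (he ▸ List.mem_cons_self (a := b) (l := t))
      have hba : b < a := by omega
      have hat : (a :: t).Nodup := List.nodup_cons.2
        ⟨fun hm => hanb (List.mem_cons_of_mem b hm), hnd.of_cons⟩
      rcases List.mem_cons.1 hx with he | hx'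
      · -- x = a
        have ihx := ih hat (List.mem_cons.2 (Or.inl he))
        rw [he] at ihx ⊢
        rw [cnt_cons, if_neg (Ne.symm hab), ihx,
          cnt_cons, if_pos rfl, cnt_cons, if_pos rfl]
        simp [h]
      rcases List.mem_cons.1 hx' with he | hx''
      · -- x = b
        rw [he]
        rw [cnt_cons, if_pos rfl, cnt_cons, if_neg hab, cnt_cons, if_pos rfl]
        simp [hba]
      · -- x ∈ t
        have hax : a ≠ x := fun he => hanb (he ▸ hx')
        have hbx : b ≠ x := fun he => hbnt (he ▸ hx'')
        have hxat : x ∈ a :: t := List.mem_cons_of_mem a hx''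
        rw [cnt_cons, if_neg hbx, ih hat hxat, cnt_cons, if_neg hax,
          cnt_cons, if_neg hax, cnt_cons, if_neg hbx]
        by_cases h1 : x < b
        · have h2 : x < a := lt_trans h1 hba
          simp [h1, h2]
        · simp [h1]

lemma mem_dropWhile_self {l : List ℕ} {x : ℕ} (hx : x ∈ l) :
    x ∈ l.dropWhile (· ≠ x) := by
  have hxt : x ∉ l.takeWhile (· ≠ x) := fun hm => by
    have := List.mem_takeWhile_imp hm; simp at this
  have hx' : x ∈ l.takeWhile (· ≠ x) ++ l.dropWhile (· ≠ x) := by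
    rw [List.takeWhile_append_dropWhile]; exact hx
  rcases List.mem_append.1 hx' with h' | h'
  · exact absurd h' hxt
  · exact h'

lemma decomp_at {l : List ℕ} {x : ℕ} (hx : x ∈ l) :
    l = l.takeWhile (· ≠ x) ++ x :: (l.dropWhile (· ≠ x)).tail := by
  have hdw : l.dropWhile (· ≠ x) ≠ [] := List.ne_nil_of_mem (mem_dropWhile_self hx)
  have hhead : (l.dropWhile (· ≠ x)).head hdw = x := by
    have := List.head_dropWhile_not (· ≠ x) (l := l) hdw
    simpa using this
  have h2 : x :: (l.dropWhile (· ≠ x)).tail = l.dropWhile (· ≠ x) := by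
    have h3 := List.cons_head_tail (l := l.dropWhile (· ≠ x)) hdw
    rw [hhead] at h3
    exact h3
  rw [h2]
  exact (List.takeWhile_append_dropWhile).symm

lemma pairwise_of_cnt : ∀ (l : List ℕ), l.Nodup → (∀ x ∈ l, cnt l x = 0) →
    l.Pairwise (· < ·) := by
  intro l
  induction l with
  | nil => intro _ _; exact List.Pairwise.nil
  | cons a t ih =>
    intro hl h
    have hnd := hl.of_cons
    have hant : a ∉ t := (List.nodup_cons.1 hl).1
    have key : ∀ x ∈ t, a < x ∧ cnt t x = 0 := by
      intro x hx
      have hax : a ≠ x := fun he => hant (he ▸ hx)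
      have h1 := h x (List.mem_cons_of_mem a hx)
      rw [cnt_cons, if_neg hax] at h1
      have hxa : ¬ x < a := by
        intro hlt; rw [if_pos hlt] at h1; omega
      refine ⟨by omega, by omega⟩
    exact List.Pairwise.cons (fun x hx => (key x hx).1) (ih hnd (fun x hx => (key x hx).2))

lemma chain_iff_cnt (l : List ℕ) (hl : l.Nodup) :
    l.Chain' (· < ·) ↔ ∀ x ∈ l, cnt l x = 0 := by
  rw [List.Chain', List.isChain_iff_pairwise]
  constructor
  · intro hp x hx
    have hdec := decomp_at hx
    rw [hdec] at hp
    have hlt : ∀ y ∈ l.takeWhile (· ≠ x), y < x := fun y hy =>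
      (List.pairwise_append.1 hp).2.2 y hy x List.mem_cons_self
    rw [cnt, List.countP_eq_zero]
    intro y hy
    have := hlt y hy
    simp; omega
  · exact pairwise_of_cnt l hl

/-- The rank of `y` within `s`. -/
def rnk (s : List ℕ) (y : ℕ) : ℕ := s.countP (fun w => w < y) + 1

lemma countP_lt_mono {s : List ℕ} {y z : ℕ} (hy : y ∈ s) (hyz : y < z) :
    s.countP (fun w => w < y) < s.countP (fun w => w < z) := by
  induction s with
  | nil => cases hy
  | cons a t ih =>
    rw [List.countP_cons, List.countP_cons]
    have hmono : t.countP (fun w => w < y) ≤ t.countP (fun w => w < z) :=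
      List.countP_mono_left (fun w _ hw => by simp at hw ⊢; omega)
    rcases List.mem_cons.1 hy with he | hy'
    · have h1 : ¬ (a < y) := by omega
      have h2 : a < z := by omega
      simp [h1, h2]
      omega
    · have := ih hy'
      by_cases h1 : a < y <;> by_cases h2 : a < z <;> simp [h1, h2] <;> omega

lemma rnk_lt_iff {s : List ℕ} {y z : ℕ} (hy : y ∈ s) (hz : z ∈ s) :
    rnk s y < rnk s z ↔ y < z := by
  constructor
  · intro h
    rcases lt_trichotomy y z with h' | rfl | h'
    · exact h'
    · exact absurd h (lt_irrefl _)
    · exact absurd (countP_lt_mono hz h') (by unfold rnk at h; omega)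
  · intro h
    have := countP_lt_mono hy h
    unfold rnk; omega

lemma rnk_le {s : List ℕ} {y : ℕ} (hy : y ∈ s) : rnk s y ≤ s.length := by
  have : s.countP (fun w => w < y) < s.length := by
    induction s with
    | nil => cases hy
    | cons a t ih =>
      rw [List.countP_cons]
      simp only [List.length_cons]
      have hle : t.countP (fun w => decide (w < y)) ≤ t.length := List.countP_le_length
      rcases List.mem_cons.1 hy with he | hy'
      · have h1 : ¬ (a < y) := by omega
        simp [h1]; omega
      · have := ih hy'
        split_ifs <;> omega
  unfold rnk; omega

lemma std_perm {s : List ℕ} (hs : s.Nodup) :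
    (s.map (rnk s)).Perm (List.range' 1 s.length) := by
  have hinj : ∀ x ∈ s, ∀ y ∈ s, rnk s x = rnk s y → x = y := by
    intro x hx y hy hxy
    rcases lt_trichotomy x y with h | h | h
    · exact absurd ((rnk_lt_iff hx hy).2 h) (by omega)
    · exact h
    · exact absurd ((rnk_lt_iff hy hx).2 h) (by omega)
  have hnd : (s.map (rnk s)).Nodup := List.Nodup.map_on hinj hs
  have hsub : s.map (rnk s) ⊆ List.range' 1 s.length := by
    intro z hz
    obtain ⟨y, hy, rfl⟩ := List.mem_map.1 hz
    have h1 : 1 ≤ rnk s y := by unfold rnk; omega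
    have h2 := rnk_le hy
    rw [List.mem_range'_1]
    omega
  refine (hnd.subperm hsub).perm_of_length_le ?_
  simp

lemma ordIso_std {s : List ℕ} (hs : s.Nodup) : OrdIso (s.map (rnk s)) s := by
  refine ⟨List.length_map _, ?_⟩
  intro i j hi hj
  rw [List.length_map] at hi hj
  rw [getElem!_pos (s.map (rnk s)) i (by simpa using hi),
    getElem!_pos (s.map (rnk s)) j (by simpa using hj),
    getElem!_pos s i hi, getElem!_pos s j hj, List.getElem_map, List.getElem_map]
  exact rnk_lt_iff (s.getElem_mem hi) (s.getElem_mem hj)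

lemma takeWhile_append_of (p : ℕ → Bool) (u v : List ℕ) (h : ∀ a ∈ u, p a = true) :
    (u ++ v).takeWhile p = u ++ v.takeWhile p := by
  induction u with
  | nil => simp
  | cons a u ih =>
    have ha := h a (List.mem_cons_self (a := a) (l := u))
    simp only [List.cons_append, List.takeWhile_cons, ha, if_true]
    rw [ih (fun b hb => h b (List.mem_cons_of_mem a hb))]

lemma avoids_iff_cnt (k : ℕ) (σ : List ℕ) (hσ : σ.Nodup) :
    (∀ π, InGamma k π → Avoids σ π) ↔ ∀ x ∈ σ, cnt σ x ≤ k := by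
  constructor
  · intro h x hx
    by_contra hc
    push_neg at hc
    set t := σ.takeWhile (· ≠ x) with ht
    have hcnt : cnt σ x = (t.filter (fun y => x < y)).length := by
      rw [cnt, List.countP_eq_length_filter]
    have hflen : k + 1 ≤ (t.filter (fun y => x < y)).length := by omega
    set s' := (t.filter (fun y => x < y)).take (k + 1) with hs'
    have hs'len : s'.length = k + 1 := by
      rw [hs', List.length_take]; omega
    have hs'gt : ∀ y ∈ s', x < y := by
      intro y hy
      have h1 := List.mem_of_mem_take hy
      have h2 := List.of_mem_filter h1
      simpa using h2
    have hs'sub : s'.Sublist t :=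
      (List.take_sublist _ _).trans List.filter_sublist
    set s : List ℕ := s' ++ [x] with hsdef
    have hssub : s.Sublist σ := by
      have hdec := decomp_at hx
      rw [hdec]
      exact hs'sub.append ((List.nil_sublist _).cons₂ x)
    have hsnd : s.Nodup := hssub.nodup hσ
    have hslen : s.length = k + 2 := by
      rw [hsdef, List.length_append, hs'len]; simp
    have hmin : ∀ y ∈ s, y ≠ x → x < y := by
      intro y hy hyx
      rcases List.mem_append.1 hy with hy' | hy'
      · exact hs'gt y hy'
      · simp at hy'; exact absurd hy' hyx
    have hrnkx : rnk s x = 1 := by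
      have h0 : s.countP (fun w => w < x) = 0 := by
        rw [List.countP_eq_zero]
        intro a ha
        by_cases hax : a = x
        · subst hax; simp
        · have := hmin a ha hax; simp; omega
      unfold rnk; rw [h0]
    refine h (s.map (rnk s)) ⟨?_, ?_, ?_⟩ ⟨s, hssub, ordIso_std hsnd⟩
    · unfold IsPermList
      rw [List.length_map]
      exact std_perm hsnd
    · rw [List.length_map]; exact hslen
    · rw [hsdef, List.map_append, List.map_singleton, hrnkx]
      exact List.getLast?_concat
  · rintro h π hπ ⟨s, hsub, hiso⟩
    obtain ⟨hperm, hlen, hlast⟩ := hπ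
    obtain ⟨hleq, hord⟩ := hiso
    have hslen : s.length = k + 2 := by rw [← hleq, hlen]
    have hkπ : k + 1 < π.length := by omega
    have hks : k + 1 < s.length := by omega
    have hπne : π ≠ [] := List.ne_nil_of_length_pos (by omega)
    have hsne : s ≠ [] := List.ne_nil_of_length_pos (by omega)
    have hπnd : π.Nodup := hperm.nodup_iff.2 List.nodup_range'
    have hπlast : π[k + 1]'hkπ = 1 := by
      have h1 : π.getLast hπne = 1 := by
        rw [List.getLast?_eq_getLast hπne] at hlast
        exact Option.some.inj hlast
      rw [List.getLast_eq_getElem] at h1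
      simpa only [hlen, Nat.add_sub_cancel, Nat.reduceSubDiff] using h1
    have hπperm' : π.Perm (List.range' 1 (k + 2)) := by
      have h1 := hperm
      unfold IsPermList at h1
      rwa [hlen] at h1
    have hπgt : ∀ i, i < k + 1 → ∀ (hiπ : i < π.length), 1 < π[i]'hiπ := by
      intro i hi hiπ
      have hmem : π[i]'hiπ ∈ List.range' 1 (k + 2) :=
        hπperm'.mem_iff.1 (List.getElem_mem hiπ)
      have h1 : 1 ≤ π[i]'hiπ := (List.mem_range'_1.1 hmem).1
      rcases Nat.lt_or_ge 1 (π[i]'hiπ) with h' | h'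
      · exact h'
      · exfalso
        have he : π[i]'hiπ = π[k + 1]'hkπ := by rw [hπlast]; omega
        have := (hπnd.getElem_inj_iff).1 he
        omega
    have hgt : ∀ i, i < k + 1 → ∀ (his : i < s.length), s[k + 1]'hks < s[i]'his := by
      intro i hi his
      have hπi : π[k + 1]! < π[i]! := by
        rw [getElem!_pos π (k + 1) hkπ, getElem!_pos π i (by omega), hπlast]
        exact hπgt i hi (by omega)
      have h2 := (hord (k + 1) i (by omega) (by omega)).1 hπi
      rwa [getElem!_pos s (k + 1) hks, getElem!_pos s i his] at h2
    have hxmem : s[k + 1]'hks ∈ σ := hsub.subset (s.getElem_mem hks)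
    have hxs : cnt σ (s[k + 1]'hks) ≤ k := h _ hxmem
    have hgl : s.getLast hsne = s[k + 1]'hks := by
      rw [List.getLast_eq_getElem]
      simp [hslen]
    have hdecs : s.dropLast ++ [s[k + 1]'hks] = s := by
      conv_rhs => rw [← List.dropLast_append_getLast hsne]
      rw [hgl]
    have hdllen : s.dropLast.length = k + 1 := by
      rw [List.length_dropLast]; omega
    have hdlgt : ∀ y ∈ s.dropLast, s[k + 1]'hks < y := by
      intro y hy
      obtain ⟨i, hi, rfl⟩ := List.mem_iff_getElem.1 hy
      rw [List.getElem_dropLast]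
      exact hgt i (by omega) (by omega)
    have hsub' : (s.dropLast ++ [s[k + 1]'hks]).Sublist σ := by
      rw [hdecs]; exact hsub
    obtain ⟨u, v, huv, hu, hv⟩ := List.append_sublist_iff.1 hsub'
    have hxv : s[k + 1]'hks ∈ v := hv.subset (List.mem_singleton_self _)
    have hσ' : (u ++ v).Nodup := huv ▸ hσ
    have hxu : ∀ a ∈ u, a ≠ s[k + 1]'hks := by
      intro a ha he
      exact (List.disjoint_of_nodup_append hσ') ha (he ▸ hxv)
    have htw : σ.takeWhile (· ≠ s[k + 1]'hks) =
        u ++ v.takeWhile (· ≠ s[k + 1]'hks) := by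
      rw [huv]
      exact takeWhile_append_of _ u v (fun a ha => by simpa using hxu a ha)
    have hcntu : k + 1 ≤ u.countP (fun y => s[k + 1]'hks < y) := by
      have h1 : (s.dropLast).countP (fun y => s[k + 1]'hks < y) = k + 1 := by
        have h0 : (s.dropLast).countP (fun y => s[k + 1]'hks < y) = s.dropLast.length :=
          List.countP_eq_length.2 (fun a ha => by simpa using hdlgt a ha)
        rw [h0, hdllen]
      calc k + 1 = (s.dropLast).countP (fun y => s[k + 1]'hks < y) := h1.symm
        _ ≤ u.countP (fun y => s[k + 1]'hks < y) := hu.countP_le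
    have hfin : k + 1 ≤ cnt σ (s[k + 1]'hks) := by
      rw [cnt, htw, List.countP_append]
      omega
    omega

lemma isperm_nodup {σ : List ℕ} (h : IsPermList σ) : σ.Nodup :=
  h.nodup_iff.2 List.nodup_range'

lemma isperm_bubble {σ : List ℕ} (h : IsPermList σ) : IsPermList (bubble σ) := by
  have hp := bubble_perm σ
  unfold IsPermList
  rw [hp.length_eq]
  exact hp.trans h

lemma step (k : ℕ) (σ : List ℕ) (hσ : IsPermList σ) (hk : 1 ≤ k) :
    (∀ π, InGamma (k - 1) π → Avoids (bubble σ) π) ↔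
      (∀ π, InGamma k π → Avoids σ π) := by
  have hnd := isperm_nodup hσ
  rw [avoids_iff_cnt _ _ (isperm_nodup (isperm_bubble hσ)), avoids_iff_cnt _ _ hnd]
  have hperm := bubble_perm σ
  constructor
  · intro h x hx
    have h1 := h x (hperm.mem_iff.2 hx)
    rw [cnt_bubble σ hnd x hx] at h1
    omega
  · intro h x hx
    have hx' : x ∈ σ := hperm.mem_iff.1 hx
    rw [cnt_bubble σ hnd x hx']
    have := h x hx'
    omega

end BubbleAux

/-- `σ` is sorted by `k` passes of bubble sort iff `σ` avoids every
permutation of length `k+2` ending in `1`; moreover `B(σ)` avoids `Γ_{k-1}`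
iff `σ` avoids `Γ_k`. -/
theorem bubble_k_passes_sortable (k : ℕ) (σ : List ℕ) (hσ : IsPermList σ) :
    ((bubble^[k] σ).Chain' (· < ·) ↔ ∀ π, InGamma k π → Avoids σ π) ∧
      (1 ≤ k →
        ((∀ π, InGamma (k - 1) π → Avoids (bubble σ) π) ↔
          ∀ π, InGamma k π → Avoids σ π)) := by
  constructor
  · induction k generalizing σ with
    | zero =>
      have hnd := BubbleAux.isperm_nodup hσ
      rw [Function.iterate_zero_apply, BubbleAux.avoids_iff_cnt 0 σ hnd,
        BubbleAux.chain_iff_cnt σ hnd]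
      exact ⟨fun h x hx => le_of_eq (h x hx), fun h x hx => Nat.le_zero.1 (h x hx)⟩
    | succ k ih =>
      rw [Function.iterate_succ_apply]
      have h1 := ih (bubble σ) (BubbleAux.isperm_bubble hσ)
      have h2 := BubbleAux.step (k + 1) σ hσ (by omega)
      simp only [Nat.add_sub_cancel] at h2
      exact h1.trans h2
  · intro hk
    exact BubbleAux.step k σ hσ hk
end
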